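/- arXiv:2306.12564 — 15 statements merged into one kernel-verified Lean document; each statement's English description precedes it below -/
import Mathlib

section
/- Let θ ∈ (0,1] with greedy sequence (a_n) defined by a_1 = G(θ), a_m = G(θ − Σ_{n<m} 1/a_n). Then Σ_{n=1}^∞ 1/a_n = θ. -/
open Filter

theorem stmt_2 (θ : ℝ) (hθ : θ ∈ Set.Ioc (0:ℝ) 1) (a : ℕ → ℤ)
    (ha1 : a 1 = ⌊1/θ⌋ + 1)
    (harec : ∀ m, 2 ≤ m →
      a m = ⌊1/(θ - ∑ n ∈ Finset.Ico 1 m, (1:ℝ)/(a n))⌋ + 1) :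
    HasSum (fun n : ℕ => (1:ℝ)/(a (n+1))) θ := by
  obtain ⟨hθ0, hθ1⟩ := hθ
  set S : ℕ → ℝ := fun m => ∑ n ∈ Finset.Ico 1 m, (1:ℝ)/(a n) with hS
  have hS1 : S 1 = 0 := by simp [hS]
  have hrec : ∀ m, 1 ≤ m → a m = ⌊1/(θ - S m)⌋ + 1 := by
    intro m hm
    rcases eq_or_lt_of_le hm with h | h
    · rw [← h, hS1, sub_zero, ha1]
    · exact harec m h
  -- one step of the induction
  have step : ∀ m, 1 ≤ m → 0 < θ - S m → θ - S m ≤ 1 →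
      0 < θ - S (m+1) ∧ θ - S (m+1) ≤ (θ - S m)/2 := by
    intro m hm h1 h2
    have hak := hrec m hm
    set r := θ - S m with hr
    have hrpos : 0 < 1/r := by positivity
    have hinv : 1 ≤ 1/r := one_le_one_div h1 h2
    have hlt : 1/r < (a m : ℝ) := by
      rw [hak]; push_cast
      exact Int.lt_floor_add_one (1/r)
    have hle : (a m : ℝ) ≤ 2/r := by
      rw [hak]; push_cast
      have := Int.floor_le (1/r)
      have h2r : 2/r = 1/r + 1/r := by ring
      linarith
    have hapos : (0:ℝ) < a m := lt_trans hrpos hlt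
    have h1a : 1/(a m:ℝ) < r := by
      have := one_div_lt_one_div_of_lt hrpos hlt
      rwa [one_div_one_div] at this
    have h2a : r/2 ≤ 1/(a m:ℝ) := by
      have := one_div_le_one_div_of_le hapos hle
      rwa [one_div_div] at this
    have hSsucc : S (m+1) = S m + 1/(a m : ℝ) := by
      simp only [hS]
      exact Finset.sum_Ico_succ_top hm _
    constructor
    · rw [hSsucc]; linarith
    · rw [hSsucc]; linarith
  have key : ∀ m, 1 ≤ m → 0 < θ - S m ∧ θ - S m ≤ 1 := by
    intro m hm
    induction m with
    | zero => omega
    | succ k ih =>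
      rcases Nat.lt_or_ge 1 (k+1) with h | h
      · have hk : 1 ≤ k := by omega
        obtain ⟨h1, h2⟩ := ih hk
        obtain ⟨h3, h4⟩ := step k hk h1 h2
        exact ⟨h3, by linarith⟩
      · have : k = 0 := by omega
        subst this
        rw [hS1, sub_zero]
        exact ⟨hθ0, hθ1⟩
  have bound : ∀ m : ℕ, θ - S (m+1) ≤ θ / 2^m := by
    intro m
    induction m with
    | zero => rw [hS1, sub_zero]; norm_num
    | succ k ih =>
      obtain ⟨h1, h2⟩ := key (k+1) (by omega)
      obtain ⟨h3, h4⟩ := step (k+1) (by omega) h1 h2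
      have : θ / 2^(k+1) = (θ / 2^k)/2 := by ring
      rw [this]
      linarith
  have ha2 : ∀ m, 1 ≤ m → (1:ℝ) < a m := by
    intro m hm
    obtain ⟨h1, h2⟩ := key m hm
    rw [hrec m hm]; push_cast
    have hfl := Int.lt_floor_add_one (1/(θ - S m))
    have hinv : 1 ≤ 1/(θ - S m) := one_le_one_div h1 h2
    linarith
  have hnonneg : ∀ i : ℕ, 0 ≤ (1:ℝ)/(a (i+1)) := by
    intro i
    have := ha2 (i+1) (by omega)
    positivity
  rw [hasSum_iff_tendsto_nat_of_nonneg hnonneg]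
  have hsum : ∀ n : ℕ, ∑ i ∈ Finset.range n, (1:ℝ)/(a (i+1)) = S (n+1) := by
    intro n
    simp only [hS]
    rw [Finset.sum_Ico_eq_sum_range]
    simp only [Nat.add_sub_cancel]
    exact Finset.sum_congr rfl fun i _ => by rw [add_comm]
  have hlow : Tendsto (fun n : ℕ => θ - θ / 2^n) atTop (nhds θ) := by
    have h0 : Tendsto (fun n : ℕ => θ / 2^n) atTop (nhds 0) :=
      Tendsto.div_atTop tendsto_const_nhds (tendsto_pow_atTop_atTop_of_one_lt one_lt_two)
    simpa using h0.const_sub θ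
  refine tendsto_of_tendsto_of_tendsto_of_le_of_le hlow tendsto_const_nhds ?_ ?_
  · intro n
    dsimp only
    rw [hsum n]
    have := bound n
    linarith
  · intro n
    dsimp only
    rw [hsum n]
    have := (key (n+1) (by omega)).1
    linarith
end

section
/- Let q ≥ 4, u ≥ 2, v ∈ {1,2}, and 1 ≤ s ≤ u−1 be integers. If (q+2)/u is an integer that is at least 3, then ⌊ q·u·(u+s) / (s(q+2) + 2u) ⌋ > (qu+v)·u·(u+s) / (s·q·u + v·s + 2u(u+s)) − 1. -/
set_option maxHeartbeats 2000000 in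
private lemma key_ineq (q u v s k : ℕ) (hq : 4 ≤ q) (hu : 2 ≤ u) (hv : v = 1 ∨ v = 2)
    (hs1 : 1 ≤ s) (hs2' : s + 1 ≤ u) (hk : q + 2 = u * k) (hk3 : 3 ≤ k) :
    (q * u + v) * u * (u + s) <
      (q * (u + s) / (s * k + 2) + 1) * (u * u * (s * k + 2) + v * s) := by
  set N : ℕ := q * (u + s) with hN
  set d : ℕ := s * k + 2 with hd
  set m : ℕ := N / d with hm
  clear_value m N d
  have hd0 : 0 < d := by rw [hd]; omega
  have hmod : d * m + N % d = N := by rw [hm]; exact Nat.div_add_mod N d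
  have hrlt : N % d < d := Nat.mod_lt _ hd0
  have hNlt : N < (m + 1) * d := by
    have : (m + 1) * d = d * m + d := by ring
    omega
  -- m ≥ u
  have hudN : u * d ≤ N := by
    have hz : (u : ℤ) * d ≤ (N : ℤ) := by
      have hA1 : (q : ℤ) + 2 = u * k := by exact_mod_cast hk
      have hdz : (d : ℤ) = s * k + 2 := by rw [hd]; push_cast; ring
      have hNz : (N : ℤ) = q * (u + s) := by rw [hN]; push_cast; ring
      have hsz : (1 : ℤ) ≤ s := by exact_mod_cast hs1
      have huz : (2 : ℤ) ≤ u := by exact_mod_cast hu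
      have hkz : (3 : ℤ) ≤ k := by exact_mod_cast hk3
      have hsu : (s : ℤ) + 1 ≤ u := by exact_mod_cast hs2'
      rw [hdz, hNz]
      -- suffices 4u + 2s ≤ k u² : since q = uk - 2
      nlinarith [mul_le_mul_of_nonneg_right hkz (mul_nonneg (by linarith : (0:ℤ) ≤ (u:ℤ)) (by linarith : (0:ℤ) ≤ (u:ℤ))),
        mul_le_mul_of_nonneg_left hA1.ge (by linarith : (0:ℤ) ≤ (u:ℤ)),
        mul_le_mul_of_nonneg_left hA1.ge (by linarith : (0:ℤ) ≤ (s:ℤ)),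
        mul_le_mul_of_nonneg_left hA1.le (by linarith : (0:ℤ) ≤ (u:ℤ)),
        mul_le_mul_of_nonneg_left hA1.le (by linarith : (0:ℤ) ≤ (s:ℤ)),
        mul_pos (by linarith : (0:ℤ) < (u:ℤ)) (by linarith : (0:ℤ) < (u:ℤ))]
    exact_mod_cast hz
  have hmu : u ≤ m := by
    rw [hm]
    exact (Nat.le_div_iff_mul_le hd0).mpr (by linarith [hudN])
  have expand : (q * u + v) * u * (u + s) = u * u * d * m + u * u * (N % d) + v * (u * (u + s)) := by
    rw [show u * u * d * m + u * u * (N % d) = u * u * (d * m + N % d) by ring, hmod, hN]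
    ring
  by_cases hC : v * (u * (u + s)) < u * u + (m + 1) * (v * s)
  · -- regime 1
    have h1 : u * u * (N % d) + u * u ≤ u * u * d := by
      calc u * u * (N % d) + u * u = u * u * (N % d + 1) := by ring
        _ ≤ u * u * d := Nat.mul_le_mul_left _ (by omega)
    calc (q * u + v) * u * (u + s)
        = u * u * d * m + u * u * (N % d) + v * (u * (u + s)) := expand
      _ < u * u * d * m + u * u * (N % d) + (u * u + (m + 1) * (v * s)) := by omega
      _ ≤ u * u * d * m + u * u * d + (m + 1) * (v * s) := by omega
      _ = (m + 1) * (u * u * d + v * s) := by ring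
  · push_neg at hC
    rcases hv with hv1 | hv2
    · -- v = 1 : contradiction with m ≥ u
      exfalso
      subst hv1
      have h2 : (u + 1) * (1 * s) ≤ (m + 1) * (1 * s) :=
        Nat.mul_le_mul_right _ (by omega)
      have h3 : u * u + (u + 1) * (1 * s) ≤ 1 * (u * (u + s)) := le_trans (by omega) hC
      nlinarith [h3]
    · -- v = 2 : finite exceptional region
      subst hv2
      have hA2 : (q : ℤ) * (u + s) < (m + 1) * ((s : ℤ) * k + 2) := by
        have h := hNlt
        have : q * (u + s) < (m + 1) * (s * k + 2) := by rw [← hN, ← hd]; exact h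
        exact_mod_cast this
      have hA3 : (u : ℤ) * u + ((m : ℤ) + 1) * (2 * s) ≤ 2 * (u * (u + s)) := by
        exact_mod_cast hC
      have hA1 : (q : ℤ) + 2 = u * k := by exact_mod_cast hk
      have hsz : (1 : ℤ) ≤ s := by exact_mod_cast hs1
      have huz : (2 : ℤ) ≤ u := by exact_mod_cast hu
      have hkz : (3 : ℤ) ≤ k := by exact_mod_cast hk3
      have hsu : (s : ℤ) + 1 ≤ u := by exact_mod_cast hs2'
      have e1 : 2 * (s : ℤ) * (q * (u + s)) < 2 * (s : ℤ) * ((m + 1) * ((s : ℤ) * k + 2)) := by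
        have h2s : (0 : ℤ) < 2 * s := by linarith
        exact mul_lt_mul_of_pos_left hA2 h2s
      have e2 : ((s : ℤ) * k + 2) * ((m : ℤ) + 1) * (2 * s) ≤ ((s : ℤ) * k + 2) * (2 * (u * (u + s)) - u * u) := by
        have hdz : (0 : ℤ) ≤ (s : ℤ) * k + 2 := by positivity
        linarith [mul_le_mul_of_nonneg_left hA3 hdz]
      have e3 : 2 * (s : ℤ) * (u + s) * ((q : ℤ) + 2) = 2 * (s : ℤ) * (u + s) * (u * k) := by
        rw [hA1]
      have hb : (s : ℤ) * k * (u * u) < 2 * (u * u) + 8 * (s * u) + 4 * (s * s) := by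
        linarith [e1, e2, e3]
      have A0 : (0:ℤ) ≤ ((k:ℤ) - 3) * ((s:ℤ) * ((u:ℤ) * u)) := by
        have h1 : (0:ℤ) ≤ (k:ℤ) - 3 := by linarith
        have h2 : (0:ℤ) ≤ (s:ℤ) * ((u:ℤ) * u) := by positivity
        exact mul_nonneg h1 h2
      have C0 : (0:ℤ) ≤ ((u:ℤ) - s) * (s:ℤ) := by
        have h1 : (0:ℤ) ≤ (u:ℤ) - s := by linarith
        exact mul_nonneg h1 (by positivity)
      have D0 : (0:ℤ) ≤ ((u:ℤ) - s - 1) * (u:ℤ) := by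
        have h1 : (0:ℤ) ≤ (u:ℤ) - s - 1 := by linarith
        exact mul_nonneg h1 (by positivity)
      have hs4 : s ≤ 4 := by
        by_contra hcon
        push_neg at hcon
        have hs5 : (5 : ℤ) ≤ s := by exact_mod_cast hcon
        have B0 : (0:ℤ) ≤ ((s:ℤ) - 5) * ((u:ℤ) * u) := by
          have h1 : (0:ℤ) ≤ (s:ℤ) - 5 := by linarith
          exact mul_nonneg h1 (by positivity)
        linarith [hb, A0, B0, C0, D0, huz, mul_self_nonneg (u:ℤ)]
      have hu8 : u ≤ 8 := by
        by_contra hcon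
        push_neg at hcon
        have hu9 : (9 : ℤ) ≤ u := by exact_mod_cast hcon
        have G1 : (0:ℤ) ≤ ((s:ℤ) - 1) * ((u:ℤ) * ((u:ℤ) - 4)) := by
          have h1 : (0:ℤ) ≤ (s:ℤ) - 1 := by linarith
          have h2 : (0:ℤ) ≤ (u:ℤ) * ((u:ℤ) - 4) :=
            mul_nonneg (by positivity) (by linarith)
          exact mul_nonneg h1 h2
        have G2 : (0:ℤ) ≤ ((s:ℤ) - 1) * ((u:ℤ) - s - 1) := by
          have h1 : (0:ℤ) ≤ (s:ℤ) - 1 := by linarith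
          have h2 : (0:ℤ) ≤ (u:ℤ) - s - 1 := by linarith
          exact mul_nonneg h1 h2
        have H0 : (0:ℤ) ≤ ((u:ℤ) - 9) * (u:ℤ) := by
          have h1 : (0:ℤ) ≤ (u:ℤ) - 9 := by linarith
          exact mul_nonneg h1 (by positivity)
        linarith [hb, A0, G1, G2, H0, hu9, mul_self_nonneg (u:ℤ)]
      have hk13 : k ≤ 13 := by
        by_contra hcon
        push_neg at hcon
        have hk14 : (14 : ℤ) ≤ k := by exact_mod_cast hcon
        have P1 : (0:ℤ) ≤ ((s:ℤ) - 1) * ((k:ℤ) * ((u:ℤ) * u)) := by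
          have h1 : (0:ℤ) ≤ (s:ℤ) - 1 := by linarith
          have h2 : (0:ℤ) ≤ (k:ℤ) * ((u:ℤ) * u) := by positivity
          exact mul_nonneg h1 h2
        have P2 : (0:ℤ) ≤ ((k:ℤ) - 14) * ((u:ℤ) * u) := by
          have h1 : (0:ℤ) ≤ (k:ℤ) - 14 := by linarith
          exact mul_nonneg h1 (by positivity)
        linarith [hb, P1, P2, C0, D0, huz, mul_self_nonneg (u:ℤ)]
      clear A0 C0 D0
      subst hm hd hN
      interval_cases u <;> interval_cases s <;> interval_cases k <;> omega

theorem stmt_3 (q u v s : ℕ) (hq : 4 ≤ q) (hu : 2 ≤ u) (hv : v = 1 ∨ v = 2)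
    (hs1 : 1 ≤ s) (hs2 : s ≤ u - 1) (hdvd : u ∣ q + 2) (hquot : 3 ≤ (q + 2) / u) :
    (⌊((q : ℝ) * u * (u + s)) / (s * (q + 2) + 2 * u)⌋ : ℝ) >
      (((q : ℝ) * u + v) * u * (u + s)) / (s * q * u + v * s + 2 * u * (u + s)) - 1 := by
  obtain ⟨k, hk⟩ := hdvd
  have hu0 : 0 < u := by omega
  have hk3 : 3 ≤ k := by
    rwa [hk, Nat.mul_div_cancel_left _ hu0] at hquot
  have hs2' : s + 1 ≤ u := by omega
  set N : ℕ := q * (u + s) with hN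
  set d : ℕ := s * k + 2 with hd
  set m : ℕ := N / d with hm
  clear_value m N d
  have hd0 : 0 < d := by rw [hd]; omega
  have hmdN : m * d ≤ N := by rw [hm]; exact Nat.div_mul_le_self N d
  have hNlt : N < (m + 1) * d := by
    have h1 : d * m + N % d = N := by rw [hm]; exact Nat.div_add_mod N d
    have h2 : N % d < d := Nat.mod_lt _ hd0
    have : (m + 1) * d = d * m + d := by ring
    omega
  have keyN : (q * u + v) * u * (u + s) < (m + 1) * (u * u * d + v * s) := by
    rw [hm, hN, hd]
    exact key_ineq q u v s k hq hu hv hs1 hs2' hk hk3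
  -- real casts
  have hqk : (q : ℝ) + 2 = u * k := by exact_mod_cast hk
  have hdr : (d : ℝ) = s * k + 2 := by rw [hd]; push_cast; ring
  have hNr : (N : ℝ) = q * (u + s) := by rw [hN]; push_cast; ring
  have hdpos : (0 : ℝ) < d := by exact_mod_cast hd0
  have hupos : (0 : ℝ) < u := by exact_mod_cast hu0
  have hden1 : (s : ℝ) * ((q : ℝ) + 2) + 2 * u = u * d := by
    linear_combination (s : ℝ) * hqk - (u : ℝ) * hdr
  have hA : ((q : ℝ) * u * (u + s)) / ((s : ℝ) * ((q : ℝ) + 2) + 2 * u)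
      = (N : ℝ) / d := by
    rw [hden1, show (q : ℝ) * u * (u + s) = u * (N : ℝ) by rw [hNr]; ring,
      mul_div_mul_left _ _ (ne_of_gt hupos)]
  have hfl : ⌊(N : ℝ) / d⌋ = (m : ℤ) := by
    rw [Int.floor_eq_iff]
    constructor
    · rw [le_div_iff₀ hdpos]
      exact_mod_cast (by exact_mod_cast hmdN : ((m * d : ℕ) : ℝ) ≤ (N : ℝ))
    · rw [div_lt_iff₀ hdpos]
      push_cast
      have := (by exact_mod_cast hNlt : ((N : ℕ) : ℝ) < (((m + 1) * d : ℕ) : ℝ))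
      push_cast at this
      linarith
  have hden2 : (s : ℝ) * q * u + v * s + 2 * u * (u + s) = u * u * d + v * s := by
    linear_combination (s : ℝ) * u * hqk - (u : ℝ) * u * hdr
  have hden2pos : (0 : ℝ) < (s : ℝ) * q * u + v * s + 2 * u * (u + s) := by
    have hv1 : (1:ℝ) ≤ v := by rcases hv with h | h <;> norm_num [h]
    have hs1' : (1:ℝ) ≤ s := by exact_mod_cast hs1
    have hq1 : (0:ℝ) ≤ q := by positivity
    nlinarith
  push_cast
  rw [hA, hfl]
  push_cast
  rw [gt_iff_lt, sub_lt_iff_lt_add, div_lt_iff₀ hden2pos]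
  have h' : (((q * u + v) * u * (u + s) : ℕ) : ℝ) < (((m + 1) * (u * u * d + v * s) : ℕ) : ℝ) := by
    exact_mod_cast keyN
  push_cast at h'
  nlinarith [h', hden2]
end

section
/- Let p, q be positive integers with p < q such that 2 is the smallest positive integer m with p dividing q + m (i.e., p ∤ q+1 and p | q+2). Let a_1, a_2 be the first two terms of the greedy Egyptian fraction expansion of p/q. Then for all integers 2 ≤ x_1 ≤ x_2 with (x_1, x_2) ≠ (a_1, a_2) and 1/x_1 + 1/x_2 < p/q, we have 1/x_1 + 1/x_2 < 1/a_1 + 1/a_2. -/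
lemma concave_pos (a b c u α β : ℤ) (ha : 0 ≤ a) (h1 : α ≤ u) (h2 : u ≤ β)
    (hα : 0 < -a*α^2 + b*α + c) (hβ : 0 < -a*β^2 + b*β + c) :
    0 < -a*u^2 + b*u + c := by
  rcases eq_or_lt_of_le (h1.trans h2) with h | h
  · have hu : u = α := by omega
    subst hu; exact hα
  · have key : (β - α) * (-a*u^2 + b*u + c)
      = (β - u) * (-a*α^2 + b*α + c) + (u - α) * (-a*β^2 + b*β + c)
        + a * ((u - α) * (β - u) * (β - α)) := by ring
    nlinarith [mul_nonneg (mul_nonneg (sub_nonneg.2 h1) (sub_nonneg.2 h2)) (sub_nonneg.2 (h1.trans h2)), mul_nonneg (sub_nonneg.2 h2) (le_of_lt hα), mul_nonneg (sub_nonneg.2 h1) (le_of_lt hβ)]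

set_option maxHeartbeats 1600000 in
lemma key_ineq_s4 (p A q e a₂ x₁ x₂ : ℤ)
    (hp : 2 ≤ p) (hA : 2 ≤ A) (hq : q = p*A - 2) (hpq : p < q)
    (he : e = 0 ∨ e = 1) (hpar : 2 ∣ q*A - e) (ha2 : 2*a₂ = q*A + 2 - e)
    (hx1 : 2 ≤ x₁) (hx12 : x₁ ≤ x₂)
    (hne : ¬(x₁ = A ∧ x₂ = a₂))
    (hD : 1 ≤ p*x₁*x₂ - q*x₁ - q*x₂) :
    (x₁ + x₂) * (A*a₂) < (A + a₂) * (x₁*x₂) := by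
  have hq3 : 3 ≤ q := by omega
  have hq2p : 2*p ≤ q + 2 := by
    have h1 := mul_le_mul_of_nonneg_left hA (show (0:ℤ) ≤ p by omega)
    linarith [hq]
  have hx2 : 2 ≤ x₂ := hx1.trans hx12
  have hn6 : 6 ≤ q*A := by
    have h1 := mul_le_mul hq3 hA (by omega) (by omega)
    linarith
  have ha2p : 4 ≤ a₂ := by omega
  have hDu : p*x₁*x₂ - q*x₁ - q*x₂ = (p*x₁ - q)*x₂ - q*x₁ := by ring
  have hu1 : 1 ≤ p*x₁ - q := by
    by_contra hcon
    push_neg at hcon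
    have h0 : (p*x₁ - q) * x₂ ≤ 0 :=
      mul_nonpos_iff.2 (Or.inr ⟨by omega, by omega⟩)
    have h6 : 0 ≤ q*x₁ := mul_nonneg (by omega) (by omega)
    linarith
  have htge : A ≤ x₁ := by
    by_contra hcon
    push_neg at hcon
    have h1 : x₁ - A ≤ -1 := by omega
    have h2 : p*(x₁ - A) ≤ p*(-1) := mul_le_mul_of_nonneg_left h1 (by omega)
    have h3 : p*x₁ - q = p*(x₁ - A) + 2 := by rw [hq]; ring
    omega
  by_cases hx1A : x₁ = A
  · -- x₁ = A : then x₂ > a₂ and the claim is immediate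
    have hDe : p*x₁*x₂ - q*x₁ - q*x₂ = 2*x₂ - q*A := by
      rw [hx1A, hq]; ring
    have hne' : x₂ ≠ a₂ := fun h => hne ⟨hx1A, h⟩
    have hx2a : a₂ + 1 ≤ x₂ := by
      rw [hDe] at hD
      rcases he with h | h <;> omega
    have hkey : (A + a₂) * (x₁*x₂) - (x₁ + x₂) * (A*a₂) = A^2*(x₂ - a₂) := by
      rw [hx1A]; ring
    have h5 : 0 < A^2 := by positivity
    have h6 := mul_pos h5 (show (0:ℤ) < x₂ - a₂ by omega)
    linarith
  · -- x₁ ≥ A + 1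
    have ht1 : A + 1 ≤ x₁ := by omega
    have ha2' : 2*a₂ = (p*A-2)*A + 2 - e := by rw [← hq]; exact ha2
    obtain ⟨u, hu⟩ : ∃ u, u = p*x₁ - q := ⟨_, rfl⟩
    obtain ⟨v, hv⟩ : ∃ v, v = p*x₂ - q := ⟨_, rfl⟩
    obtain ⟨D, hDd⟩ : ∃ D, D = p*x₁*x₂ - q*x₁ - q*x₂ := ⟨_, rfl⟩
    obtain ⟨kg, hkg⟩ : ∃ kg, kg = p*(2-e) := ⟨_, rfl⟩
    obtain ⟨M, hM⟩ : ∃ M, M = u*(q+2)*(q*(q+2)+kg) - 2*kg*(u+q) := ⟨_, rfl⟩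
    have hDge : 1 ≤ D := by rw [hDd]; exact hD
    have hu1' : 1 ≤ u := by rw [hu]; exact hu1
    have hkgb : p ≤ kg ∧ kg ≤ 2*p := by
      rcases he with h | h <;> rw [h] at hkg <;> constructor <;> omega
    have hkgpos : 2 ≤ kg := by omega
    have hpk : p*D = u*v - q^2 := by rw [hDd, hu, hv]; ring
    have hvu : u ≤ v := by
      have h1 : p*x₁ ≤ p*x₂ := mul_le_mul_of_nonneg_left hx12 (by omega)
      omega
    have hbridge : u*(2*p^3)*(q*((A + a₂) * (x₁*x₂) - (x₁ + x₂) * (A*a₂)))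
        = (p*D)*M - 2*kg*q*(u+q)^2 := by
      rw [hM, hkg, hDd, hu, hq]
      linear_combination ((p*x₁ - (p*A-2))*p^3*(p*A-2)*(x₁*x₂ - (x₁+x₂)*A)) * ha2'
    suffices hW : 2*kg*q*(u+q)^2 < (p*D)*M by
      by_contra hcon
      push_neg at hcon
      have hX : (A + a₂) * (x₁*x₂) - (x₁ + x₂) * (A*a₂) ≤ 0 := by linarith
      have h1 : u*(2*p^3)*(q*((A + a₂) * (x₁*x₂) - (x₁ + x₂) * (A*a₂))) ≤ 0 := by
        apply mul_nonpos_of_nonneg_of_nonpos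
        · positivity
        · exact mul_nonpos_of_nonneg_of_nonpos (by omega) hX
      linarith
    rcases le_or_gt u q with huq | huq
    · -- p+2 ≤ u ≤ q
      have hu_lb : p+2 ≤ u := by
        have h2 : p*1 ≤ p*(x₁ - A) := mul_le_mul_of_nonneg_left (by omega) (by omega)
        have h3 : u = p*(x₁ - A) + 2 := by rw [hu, hq]; ring
        omega
      by_cases hDe2 : 2 - e ≤ D
      · -- k ≥ k_g : concavity argument with kg replaced by its lower bound p
        obtain ⟨a, hpa⟩ : ∃ a : ℕ, p = (a:ℤ) + 2 := ⟨(p-2).toNat, by omega⟩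
        obtain ⟨B, hAB⟩ : ∃ B : ℕ, A = (B:ℤ) + 2 := ⟨(A-2).toNat, by omega⟩
        have hqe : q = (a:ℤ)*(B:ℤ) + 2*(a:ℤ) + 2*(B:ℤ) + 2 := by rw [hq, hpa, hAB]; ring
        obtain ⟨w0, hw0⟩ : ∃ w0 : ℕ, q = p + 2 + (w0:ℤ) := ⟨(q-p-2).toNat, by omega⟩
        have hw0' : (w0:ℤ) = (a:ℤ)*(B:ℤ) + (a:ℤ) + 2*(B:ℤ) - 2 := by
          linear_combination hqe - hw0 - hpa
        have hform : ∀ w : ℤ, w*(q+2)*(q*(q+2)+p) - 2*p*(w+q) - 2*q*(w+q)^2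
            = -(2*q)*w^2 + ((q+2)*(q*(q+2)+p) - 2*p - 4*q^2)*w + (-(2*p*q) - 2*q^3) := by
          intro w; ring
        have hend1 : 0 < (p+2)*(q+2)*(q*(q+2)+p) - 2*p*((p+2)+q) - 2*q*((p+2)+q)^2 := by
          have hid : (p+2)*(q+2)*(q*(q+2)+p) - 2*p*((p+2)+q) - 2*q*((p+2)+q)^2
              = ((2 + 14*B + 48*B*B + 16*B*B*B + 11*a + 111*a*B + 120*a*B*B + 32*a*B*B*B + 54*a*a + 146*a*a*B + 108*a*a*B*B + 24*a*a*B*B*B + 38*a*a*a + 71*a*a*a*B + 42*a*a*a*B*B + 8*a*a*a*B*B*B + 8*a*a*a*a + 12*a*a*a*a*B + 6*a*a*a*a*B*B + 1*a*a*a*a*B*B*B + 5*w0 : ℕ) : ℤ) := by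
            rw [hq, hpa, hAB]
            push_cast
            linear_combination (-5:ℤ) * hw0'
          rw [hid]; exact_mod_cast Nat.pos_of_ne_zero (by omega)
        have hend2 : 0 < q*(q+2)*(q*(q+2)+p) - 2*p*(q+q) - 2*q*(q+q)^2 := by
          have hid : q*(q+2)*(q*(q+2)+p) - 2*p*(q+q) - 2*q*(q+q)^2
              = ((2 + 6*B + 24*B*B + 32*B*B*B + 16*B*B*B*B + 7*a + 55*a*B + 124*a*B*B + 112*a*B*B*B + 32*a*B*B*B*B + 28*a*a + 130*a*a*B + 202*a*a*B*B + 120*a*a*B*B*B + 24*a*a*B*B*B*B + 36*a*a*a + 116*a*a*a*B + 121*a*a*a*B*B + 52*a*a*a*B*B*B + 8*a*a*a*B*B*B*B + 16*a*a*a*a + 32*a*a*a*a*B + 24*a*a*a*a*B*B + 8*a*a*a*a*B*B*B + 1*a*a*a*a*B*B*B*B + w0 : ℕ) : ℤ) := by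
            rw [hq, hpa, hAB]
            push_cast
            linear_combination (-1:ℤ) * hw0'
          rw [hid]; exact_mod_cast Nat.pos_of_ne_zero (by omega)
        rw [hform (p+2)] at hend1
        rw [hform q] at hend2
        have hQp := concave_pos (2*q) _ _ u (p+2) q (by omega) hu_lb huq hend1 hend2
        rw [← hform u] at hQp
        have huq2 : 0 ≤ u*(q+2) - 2*(u+q) := by
          have h9 : u*(q+2) - 2*(u+q) = q*(u-2) := by ring
          have h10 : 0 ≤ q*(u-2) := mul_nonneg (by omega) (by omega)
          omega
        have hMge : u*(q+2)*(q*(q+2)+p) - 2*p*(u+q) ≤ M := by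
          have hdiff : M - (u*(q+2)*(q*(q+2)+p) - 2*p*(u+q)) = (kg - p)*(u*(q+2) - 2*(u+q)) := by
            rw [hM]; ring
          have h11 := mul_nonneg (show (0:ℤ) ≤ kg - p by omega) huq2
          linarith
        have hkD : kg ≤ p*D := by
          have h1 : p*(2-e) ≤ p*D := mul_le_mul_of_nonneg_left hDe2 (by omega)
          omega
        have hsq : 0 ≤ 2*q*(u+q)^2 := by positivity
        have hMp2 : 2*q*(u+q)^2 < M := by linarith
        have hMpos : 0 < M := by linarith
        calc 2*kg*q*(u+q)^2 = kg*(2*q*(u+q)^2) := by ring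
        _ < kg*M := mul_lt_mul_of_pos_left hMp2 (by omega)
        _ ≤ (p*D)*M := mul_le_mul_of_nonneg_right hkD (le_of_lt hMpos)
      · -- D = 1, e = 0 : the delicate case
        have he0 : e = 0 := by omega
        have hD1 : D = 1 := by omega
        have hkg2 : kg = 2*p := by rw [he0] at hkg; linear_combination hkg
        -- p is odd
        have hpodd : p % 2 = 1 := by
          by_contra hpe
          have h2 : (2:ℤ) ∣ p := by omega
          obtain ⟨p', rfl⟩ := h2
          have hDev : 2*p'*x₁*x₂ - q*x₁ - q*x₂
              = 2*(p'*(x₁*x₂) - p'*A*x₁ + x₁ - p'*A*x₂ + x₂) := by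
            rw [hq]; ring
          have hD1' : 2*p'*x₁*x₂ - q*x₁ - q*x₂ = 1 := by rw [← hDd]; exact hD1
          omega
        obtain ⟨P, hP⟩ : ∃ P : ℤ, p = 2*P + 1 := ⟨(p-1)/2, by omega⟩
        -- A is even
        have hAev : A % 2 = 0 := by
          by_contra hAe
          obtain ⟨A', hA'⟩ : ∃ A' : ℤ, A = 2*A' + 1 := ⟨(A-1)/2, by omega⟩
          have hoddid : q*A - e = 2*(4*P*A'*A' + 4*P*A' + P + 2*A'*A' - 1) + 1 := by
            rw [he0, hq, hP, hA']; ring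
          omega
        obtain ⟨A'', hA''⟩ : ∃ A'' : ℤ, A = 2*A'' := ⟨A/2, by omega⟩
        have hqev : q = 2*((2*P+1)*A'' - 1) := by rw [hq, hP, hA'']; ring
        have hx1odd : x₁ % 2 = 1 := by
          by_contra hxe
          obtain ⟨m, hm⟩ : ∃ m : ℤ, x₁ = 2*m := ⟨x₁/2, by omega⟩
          have hD1' : p*x₁*x₂ - q*x₁ - q*x₂ = 1 := by rw [← hDd]; exact hD1
          have hev : p*x₁*x₂ - q*x₁ - q*x₂
              = 2*(p*m*x₂ - ((2*P+1)*A'' - 1)*x₁ - ((2*P+1)*A'' - 1)*x₂) := by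
            rw [hm, hqev]; ring
          omega
        by_cases hp3 : p = 3
        · subst hp3
          have huodd : u % 2 = 1 := by
            obtain ⟨m, hm⟩ : ∃ m : ℤ, x₁ = 2*m + 1 := ⟨(x₁-1)/2, by omega⟩
            have huid : u = 2*(3*m + 1 - ((2*P+1)*A'' - 1)) + 1 := by
              rw [hu, hqev, hm]; ring
            omega
          have hut3 : u = 3*(x₁ - A) + 2 := by rw [hu, hq]; ring
          have hu511 : u = 5 ∨ 11 ≤ u := by omega
          rcases hu511 with hu5 | hu11
          · have hdvd5 : (5:ℤ) ∣ q^2 + 3 := ⟨v, by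
              have h := hpk
              rw [hD1, hu5] at h
              linarith⟩
            have h0 : (((q^2+3 : ℤ) : ZMod 5)) = 0 := by
              rw [ZMod.intCast_zmod_eq_zero_iff_dvd]; exact_mod_cast hdvd5
            push_cast at h0
            have hall : ∀ z : ZMod 5, ¬(z^2 + 3 = 0) := by decide
            exact absurd h0 (hall _)
          · have hq16 : 16 ≤ q := by omega
            obtain ⟨c, hc⟩ : ∃ c : ℕ, A = 6 + 2*(c:ℤ) := ⟨((A-6)/2).toNat, by omega⟩
            have hform3 : ∀ w : ℤ, w*(q+2)*(q*(q+2)+6) - 12*(w+q) - 4*q*(w+q)^2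
                = -(4*q)*w^2 + ((q+2)*(q*(q+2)+6) - 12 - 8*q^2)*w + (-(12*q) - 4*q^3) := by
              intro w; ring
            have hend1 : 0 < 11*(q+2)*(q*(q+2)+6) - 12*(11+q) - 4*q*(11+q)^2 := by
              have hid : 11*(q+2)*(q*(q+2)+6) - 12*(11+q) - 4*q*(11+q)^2 = ((11232 + 21492*c + 10512*c*c + 1512*c*c*c : ℕ) : ℤ) := by
                rw [hq, hc]; push_cast; ring
              rw [hid]; exact_mod_cast Nat.pos_of_ne_zero (by omega)
            have hend2 : 0 < q*(q+2)*(q*(q+2)+6) - 12*(q+q) - 4*q*(q+q)^2 := by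
              have hid : q*(q+2)*(q*(q+2)+6) - 12*(q+q) - 4*q*(q+q)^2 = ((18752 + 44856*c + 34920*c*c + 11232*c*c*c + 1296*c*c*c*c : ℕ) : ℤ) := by
                rw [hq, hc]; push_cast; ring
              rw [hid]; exact_mod_cast Nat.pos_of_ne_zero (by omega)
            rw [hform3 11] at hend1
            rw [hform3 q] at hend2
            have hR := concave_pos (4*q) _ _ u 11 q (by omega) hu11 huq hend1 hend2
            rw [← hform3 u] at hR
            have hM6 : M = u*(q+2)*(q*(q+2)+6) - 12*(u+q) := by rw [hM, hkg2]; ring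
            rw [hkg2, hD1]
            linarith
        · have hp5 : 5 ≤ p := by omega
          by_cases hA2 : A = 2
          · subst hA2
            have hq' : q = 2*p - 2 := by rw [hq]; ring
            have hx11 : x₁ = 3 := by
              by_contra hcc
              have h2 : 2 ≤ x₁ - 2 := by omega
              have h3 : p*2 ≤ p*(x₁-2) := mul_le_mul_of_nonneg_left h2 (by omega)
              have h4 : u = p*(x₁-2)+2 := by rw [hu, hq]; ring
              omega
            have hueq : u = p + 2 := by rw [hu, hx11, hq']; ring
            have h34 : (p+2)*(v - 4*p + 15) = 34 := by
              have h := hpk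
              rw [hD1, hueq, hq'] at h
              linear_combination -h
            have hc1 : 1 ≤ v - 4*p + 15 := by
              by_contra hcc; push_neg at hcc
              have h8 := mul_nonpos_of_nonneg_of_nonpos (show (0:ℤ) ≤ p+2 by omega)
                (show v - 4*p + 15 ≤ 0 by omega)
              linarith
            have hc4 : v - 4*p + 15 ≤ 4 := by
              by_contra hcc; push_neg at hcc
              have h7 := mul_le_mul (show (7:ℤ) ≤ p+2 by omega)
                (show (5:ℤ) ≤ v - 4*p + 15 by omega) (by omega) (by omega)
              linarith
            obtain ⟨c, hcdef⟩ : ∃ c : ℤ, c = v - 4*p + 15 := ⟨_, rfl⟩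
            rw [← hcdef] at h34 hc1 hc4
            have hp15 : p = 15 := by interval_cases c <;> omega
            subst hp15
            have hc2 : c = 2 := by omega
            have hq28 : q = 28 := by omega
            have hv47 : v = 47 := by omega
            have hx25 : x₂ = 5 := by omega
            have hMv : M = 441000 := by rw [hM, hkg2, hueq, hq28]; norm_num
            rw [hkg2, hD1, hq28, hueq, hMv]
            norm_num
          · have hA4 : 4 ≤ A := by omega
            obtain ⟨b, hb⟩ : ∃ b : ℕ, p = 5 + 2*(b:ℤ) := ⟨((p-5)/2).toNat, by omega⟩
            obtain ⟨c, hc⟩ : ∃ c : ℕ, A = 4 + 2*(c:ℤ) := ⟨((A-4)/2).toNat, by omega⟩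
            have hform4 : ∀ w : ℤ, w*(q+2)*(q*(q+2)+2*p) - 4*p*(w+q) - 4*q*(w+q)^2
                = -(4*q)*w^2 + ((q+2)*(q*(q+2)+2*p) - 4*p - 8*q^2)*w + (-(4*p*q) - 4*q^3) := by
              intro w; ring
            have hend1 : 0 < (p+2)*(q+2)*(q*(q+2)+2*p) - 4*p*((p+2)+q) - 4*q*((p+2)+q)^2 := by
              have hid : (p+2)*(q+2)*(q*(q+2)+2*p) - 4*p*((p+2)+q) - 4*q*((p+2)+q)^2
                  = ((6300 + 17900*c + 13400*c*c + 3000*c*c*c + 22240*b + 44520*b*c + 27920*b*c*c + 5600*b*c*c*c + 21168*b*b + 36624*b*b*c + 20704*b*b*c*c + 3840*b*b*c*c*c + 7872*b*b*b + 12512*b*b*b*c + 6592*b*b*b*c*c + 1152*b*b*b*c*c*c + 1024*b*b*b*b + 1536*b*b*b*b*c + 768*b*b*b*b*c*c + 128*b*b*b*b*c*c*c : ℕ) : ℤ) := by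
                rw [hq, hb, hc]; push_cast; ring
              rw [hid]; exact_mod_cast Nat.pos_of_ne_zero (by omega)
            have hend2 : 0 < q*(q+2)*(q*(q+2)+2*p) - 4*p*(q+q) - 4*q*(q+q)^2 := by
              have hid : q*(q+2)*(q*(q+2)+2*p) - 4*p*(q+q) - 4*q*(q+q)^2
                  = ((39168 + 121480*c + 131000*c*c + 60000*c*c*c + 10000*c*c*c*c + 98336*b + 259552*b*c + 249200*b*c*c + 104000*b*c*c*c + 16000*b*c*c*c*c + 84928*b*b + 200224*b*b*c + 174880*b*b*c*c + 67200*b*b*c*c*c + 9600*b*b*c*c*c*c + 30976*b*b*b + 66816*b*b*b*c + 53824*b*b*b*c*c + 19200*b*b*b*c*c*c + 2560*b*b*b*c*c*c*c + 4096*b*b*b*b + 8192*b*b*b*b*c + 6144*b*b*b*b*c*c + 2048*b*b*b*b*c*c*c + 256*b*b*b*b*c*c*c*c : ℕ) : ℤ) := by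
                rw [hq, hb, hc]; push_cast; ring
              rw [hid]; exact_mod_cast Nat.pos_of_ne_zero (by omega)
            rw [hform4 (p+2)] at hend1
            rw [hform4 q] at hend2
            have hR := concave_pos (4*q) _ _ u (p+2) q (by omega) hu_lb huq hend1 hend2
            rw [← hform4 u] at hR
            have hM2p : M = u*(q+2)*(q*(q+2)+2*p) - 4*p*(u+q) := by rw [hM, hkg2]; ring
            have hfin : 4*q*(u+q)^2 < M := by linarith
            calc 2*kg*q*(u+q)^2 = p*(4*q*(u+q)^2) := by rw [hkg2]; ring
            _ < p*M := mul_lt_mul_of_pos_left hfin (by omega)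
            _ = (p*D)*M := by rw [hD1]; ring
    · -- u ≥ q+1
      have hC1 : 2*kg*q*(u+q) < (u-q)*M := by
        obtain ⟨a, hpa⟩ : ∃ a : ℕ, p = (a:ℤ) + 2 := ⟨(p-2).toNat, by omega⟩
        obtain ⟨B, hAB⟩ : ∃ B : ℕ, A = (B:ℤ) + 2 := ⟨(A-2).toNat, by omega⟩
        obtain ⟨w, hw⟩ : ∃ w : ℕ, u = q + 1 + (w:ℤ) := ⟨(u-q-1).toNat, by omega⟩
        rcases he with he' | he'
        · have hkg' : kg = 2*p := by rw [he'] at hkg; linear_combination hkg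
          have hid : (u-q)*M - 2*kg*q*(u+q) = ((24 + 128*w + 40*w*w + 136*B + 336*B*w + 72*B*w*w + 200*B*B + 304*B*B*w + 40*B*B*w*w + 104*B*B*B + 112*B*B*B*w + 8*B*B*B*w*w + 16*B*B*B*B + 16*B*B*B*B*w + 100*a + 336*a*w + 76*a*w*w + 408*a*B + 784*a*B*w + 120*a*B*w*w + 488*a*B*B + 648*a*B*B*w + 64*a*B*B*w*w + 220*a*B*B*B + 232*a*B*B*B*w + 12*a*B*B*B*w*w + 32*a*B*B*B*B + 32*a*B*B*B*B*w + 140*a*a + 312*a*a*w + 44*a*a*w*w + 434*a*a*B + 660*a*a*B*w + 66*a*a*B*w*w + 434*a*a*B*B + 516*a*a*B*B*w + 34*a*a*B*B*w*w + 174*a*a*B*B*B + 180*a*a*B*B*B*w + 6*a*a*B*B*B*w*w + 24*a*a*B*B*B*B + 24*a*a*B*B*B*B*w + 80*a*a*a + 120*a*a*a*w + 8*a*a*a*w*w + 196*a*a*a*B + 240*a*a*a*B*w + 12*a*a*a*B*w*w + 168*a*a*a*B*B + 182*a*a*a*B*B*w + 6*a*a*a*B*B*w*w + 61*a*a*a*B*B*B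 + 62*a*a*a*B*B*B*w + 1*a*a*a*B*B*B*w*w + 8*a*a*a*B*B*B*B + 8*a*a*a*B*B*B*B*w + 16*a*a*a*a + 16*a*a*a*a*w + 32*a*a*a*a*B + 32*a*a*a*a*B*w + 24*a*a*a*a*B*B + 24*a*a*a*a*B*B*w + 8*a*a*a*a*B*B*B + 8*a*a*a*a*B*B*B*w + 1*a*a*a*a*B*B*B*B + 1*a*a*a*a*B*B*B*B*w : ℕ) : ℤ) := by
            rw [hM, hkg', hw, hq, hpa, hAB]; push_cast; ring
          have hpos : 0 < (u-q)*M - 2*kg*q*(u+q) := by rw [hid]; exact_mod_cast Nat.pos_of_ne_zero (by omega)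
          linarith
        · have hkg' : kg = p := by rw [he'] at hkg; linear_combination hkg
          have hid : (u-q)*M - 2*kg*q*(u+q) = ((60 + 128*w + 36*w*w + 196*B + 328*B*w + 68*B*w*w + 224*B*B + 296*B*B*w + 40*B*B*w*w + 104*B*B*B + 112*B*B*B*w + 8*B*B*B*w*w + 16*B*B*B*B + 16*B*B*B*B*w + 178*a + 328*a*w + 70*a*w*w + 516*a*B + 760*a*B*w + 116*a*B*w*w + 524*a*B*B + 636*a*B*B*w + 64*a*B*B*w*w + 220*a*B*B*B + 232*a*B*B*B*w + 12*a*B*B*B*w*w + 32*a*B*B*B*B + 32*a*B*B*B*B*w + 194*a*a + 300*a*a*w + 42*a*a*w*w + 497*a*a*B + 642*a*a*B*w + 65*a*a*B*w*w + 452*a*a*B*B + 510*a*a*B*B*w + 34*a*a*B*B*w*w + 174*a*a*B*B*B + 180*a*a*B*B*B*w + 6*a*a*B*B*B*w*w + 24*a*a*B*B*B*B + 24*a*a*B*B*B*B*w + 92*a*a*a + 116*a*a*a*w + 8*a*a*a*w*w + 208*a*a*a*B + 236*a*a*a*B*w + 12*a*a*a*B*w*w + 171*a*a*a*B*B + 181*a*a*a*B*B*w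 + 6*a*a*a*B*B*w*w + 61*a*a*a*B*B*B + 62*a*a*a*B*B*B*w + 1*a*a*a*B*B*B*w*w + 8*a*a*a*B*B*B*B + 8*a*a*a*B*B*B*B*w + 16*a*a*a*a + 16*a*a*a*a*w + 32*a*a*a*a*B + 32*a*a*a*a*B*w + 24*a*a*a*a*B*B + 24*a*a*a*a*B*B*w + 8*a*a*a*a*B*B*B + 8*a*a*a*a*B*B*B*w + 1*a*a*a*a*B*B*B*B + 1*a*a*a*a*B*B*B*B*w : ℕ) : ℤ) := by
            rw [hM, hkg', hw, hq, hpa, hAB]; push_cast; ring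
          have hpos : 0 < (u-q)*M - 2*kg*q*(u+q) := by rw [hid]; exact_mod_cast Nat.pos_of_ne_zero (by omega)
          linarith
      have hMpos : 0 < M := by
        by_contra hMc
        push_neg at hMc
        have h1 : (u-q)*M ≤ 0 := mul_nonpos_of_nonneg_of_nonpos (by omega) hMc
        have h2 : 0 ≤ 2*kg*q*(u+q) := by positivity
        linarith
      have hidd : p*D - (u-q)*(u+q) = u*(v-u) := by linear_combination hpk
      have hkub : (u-q)*(u+q) ≤ p*D := by
        have h12 := mul_nonneg (show (0:ℤ) ≤ u by omega) (show (0:ℤ) ≤ v - u by omega)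
        linarith
      calc 2*kg*q*(u+q)^2 = (2*kg*q*(u+q))*(u+q) := by ring
      _ < ((u-q)*M)*(u+q) := mul_lt_mul_of_pos_right hC1 (by omega)
      _ = ((u-q)*(u+q))*M := by ring
      _ ≤ (p*D)*M := mul_le_mul_of_nonneg_right hkub (le_of_lt hMpos)

theorem stmt_4 (p q : ℕ) (hp : 0 < p) (hpq : p < q)
    (h1 : ¬ p ∣ q + 1) (h2 : p ∣ q + 2)
    (a₁ a₂ : ℤ) (ha1 : a₁ = ⌊(q:ℝ)/p⌋ + 1)
    (ha2 : a₂ = ⌊((p:ℝ)/q - 1/(a₁:ℝ))⁻¹⌋ + 1) :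
    ∀ x₁ x₂ : ℤ, 2 ≤ x₁ → x₁ ≤ x₂ → (x₁, x₂) ≠ (a₁, a₂) →
      (1:ℝ)/x₁ + 1/x₂ < (p:ℝ)/q →
      (1:ℝ)/x₁ + 1/x₂ < 1/(a₁:ℝ) + 1/(a₂:ℝ) := by
  intro x₁ x₂ hx1 hx12 hne hlt
  have hp2 : 2 ≤ p := by
    rcases Nat.lt_or_ge p 2 with h | h
    · interval_cases p
      exact absurd (one_dvd _) h1
    · exact h
  obtain ⟨A, hA⟩ := h2
  have hA2 : 2 ≤ A := by
    by_contra hc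
    push_neg at hc
    interval_cases A <;> omega
  have hAz : (q:ℤ) + 2 = (p:ℤ)*(A:ℤ) := by exact_mod_cast hA
  have hqz : (q:ℤ) = (p:ℤ)*(A:ℤ) - 2 := by linarith
  have hpR : (0:ℝ) < (p:ℝ) := by positivity
  have hqR : (0:ℝ) < (q:ℝ) := by
    have : 0 < q := by omega
    exact_mod_cast this
  have hAR : (0:ℝ) < (A:ℝ) := by
    have : 0 < A := by omega
    exact_mod_cast this
  have hAr : (q:ℝ) + 2 = (p:ℝ)*(A:ℝ) := by exact_mod_cast hA
  have hp2R : (2:ℝ) ≤ (p:ℝ) := by exact_mod_cast hp2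
  -- first floor
  have hfl1 : ⌊(q:ℝ)/(p:ℝ)⌋ = (A:ℤ) - 1 := by
    rw [Int.floor_eq_iff]
    constructor
    · rw [le_div_iff₀ hpR]
      push_cast
      linarith
    · rw [div_lt_iff₀ hpR]
      push_cast
      linarith
  have ha1A : a₁ = (A:ℤ) := by rw [ha1, hfl1]; ring
  -- remainder computation
  have hq0 : (q:ℝ) ≠ 0 := ne_of_gt hqR
  have hA0 : (A:ℝ) ≠ 0 := ne_of_gt hAR
  have hrem : (p:ℝ)/(q:ℝ) - 1/(a₁:ℝ) = 2/((q:ℝ)*(A:ℝ)) := by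
    rw [ha1A]
    push_cast
    rw [div_sub_div _ _ hq0 hA0, div_eq_div_iff (by positivity) (by positivity)]
    linear_combination (-(q:ℝ)*(A:ℝ))*hAr
  have hinv : ((p:ℝ)/(q:ℝ) - 1/(a₁:ℝ))⁻¹ = ((q:ℝ)*(A:ℝ))/2 := by
    rw [hrem, inv_div]
  -- second floor
  obtain ⟨nZ, hnZ⟩ : ∃ nZ : ℤ, nZ = (q:ℤ)*(A:ℤ) := ⟨_, rfl⟩
  have hn6 : 6 ≤ nZ := by
    have h3 : (3:ℤ) ≤ (q:ℤ) := by exact_mod_cast (by omega : 3 ≤ q)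
    have h2' : (2:ℤ) ≤ (A:ℤ) := by exact_mod_cast hA2
    have := mul_le_mul h3 h2' (by omega) (by omega)
    omega
  have hnR : ((q:ℝ)*(A:ℝ)) = ((nZ:ℤ):ℝ) := by rw [hnZ]; push_cast; ring
  have hfl2 : ⌊((nZ:ℤ):ℝ)/2⌋ = nZ/2 := by
    rw [Int.floor_eq_iff]
    constructor
    · rw [le_div_iff₀ (by norm_num : (0:ℝ) < 2)]
      exact_mod_cast (by omega : (nZ/2)*2 ≤ nZ)
    · rw [div_lt_iff₀ (by norm_num : (0:ℝ) < 2)]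
      push_cast
      exact_mod_cast (by omega : nZ < (nZ/2 + 1)*2)
  have ha2v : a₂ = nZ/2 + 1 := by
    rw [ha2, hinv, hnR, hfl2]
  -- apply the key inequality
  have hx1z : (2:ℤ) ≤ x₁ := hx1
  have hx2z : 2 ≤ x₂ := le_trans hx1 hx12
  have hx1R : (0:ℝ) < (x₁:ℝ) := by exact_mod_cast (by omega : (0:ℤ) < x₁)
  have hx2R : (0:ℝ) < (x₂:ℝ) := by exact_mod_cast (by omega : (0:ℤ) < x₂)
  have hDr : ((x₂:ℝ) + (x₁:ℝ))*(q:ℝ) < (p:ℝ)*((x₁:ℝ)*(x₂:ℝ)) := by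
    rw [div_add_div _ _ (ne_of_gt hx1R) (ne_of_gt hx2R), div_lt_div_iff₀ (by positivity) hqR] at hlt
    linarith
  have hDz : ((x₂:ℤ) + x₁)*(q:ℤ) < (p:ℤ)*(x₁*x₂) := by exact_mod_cast hDr
  have hD : 1 ≤ (p:ℤ)*x₁*x₂ - (q:ℤ)*x₁ - (q:ℤ)*x₂ := by nlinarith [hDz]
  have hpqz : (p:ℤ) < (q:ℤ) := by exact_mod_cast hpq
  have hnee : ¬(x₁ = (A:ℤ) ∧ x₂ = a₂) := by
    rintro ⟨u1, u2⟩
    exact hne (by rw [u1, u2, ha1A])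
  have hKI := key_ineq_s4 (p:ℤ) (A:ℤ) (q:ℤ) (nZ % 2) a₂ x₁ x₂
    (by exact_mod_cast hp2) (by exact_mod_cast hA2) hqz hpqz
    (by omega) (by omega) (by omega) hx1z hx12 hnee hD
  -- back to the reals
  have ha2p : (4:ℤ) ≤ a₂ := by omega
  have ha2R : (0:ℝ) < (a₂:ℝ) := by exact_mod_cast (by omega : (0:ℤ) < a₂)
  rw [ha1A]
  have hAiR : (0:ℝ) < ((A:ℤ):ℝ) := by exact_mod_cast (by omega : (0:ℤ) < (A:ℤ))
  rw [div_add_div _ _ (ne_of_gt hx1R) (ne_of_gt hx2R),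
      div_add_div _ _ (ne_of_gt hAiR) (ne_of_gt ha2R),
      div_lt_div_iff₀ (by positivity) (by positivity)]
  have hKIR : ((x₁:ℝ) + x₂) * (((A:ℤ):ℝ)*(a₂:ℝ)) < (((A:ℤ):ℝ) + (a₂:ℝ)) * ((x₁:ℝ)*(x₂:ℝ)) := by
    exact_mod_cast hKI
  push_cast at hKIR ⊢
  nlinarith [hKIR]
end

section
/- For every integer j ≥ 1, setting k = 4j and v = 1, the inequality (k(kv+1)((k+1)v−1) + k + 1/v) / (2k + 1 + 1/(k v²)) > ⌊ k(kv+1)((k+1)v−1)/(2k+1) ⌋ + 1 holds; i.e., (16j²(4j+1) + 4j + 1)/(8j + 1 + 1/(4j)) > ⌊16j²(4j+1)/(8j+1)⌋ + 1. -/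
theorem stmt_6 (j : ℕ) (hj : 1 ≤ j) :
    (16 * (j:ℝ)^2 * (4 * j + 1) + 4 * j + 1) / (8 * j + 1 + 1 / (4 * j)) >
      (⌊(16 * (j:ℝ)^2 * (4 * j + 1)) / (8 * j + 1)⌋ : ℝ) + 1 := by
  have hx : (1:ℝ) ≤ (j:ℝ) := by exact_mod_cast hj
  have h8 : (0:ℝ) < 8*(j:ℝ)+1 := by linarith
  have h4 : (0:ℝ) < 4*(j:ℝ) := by linarith
  have hfloor : ⌊(16 * (j:ℝ)^2 * (4 * j + 1)) / (8 * j + 1)⌋ = 8*(j:ℤ)^2+j-1 := by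
    rw [Int.floor_eq_iff]
    constructor
    · rw [le_div_iff₀ h8]; push_cast; nlinarith
    · rw [div_lt_iff₀ h8]; push_cast; nlinarith
  rw [hfloor]
  push_cast
  have hden : (8*(j:ℝ) + 1 + 1/(4*(j:ℝ))) = (32*(j:ℝ)^2+4*j+1)/(4*j) := by
    field_simp; ring
  rw [hden, gt_iff_lt, div_div_eq_mul_div, lt_div_iff₀ (by nlinarith : (0:ℝ) < 32*(j:ℝ)^2+4*j+1)]
  nlinarith
end

section
/- For every integer k ≥ 4, there exist positive integers p and q with p < q such that k is the least positive integer m with p | q + m, and the greedy algorithm does not give the best two-term underapproximation of p/q: there exist integers 2 ≤ x_1 ≤ x_2 with 1/a_1 + 1/a_2 < 1/x_1 + 1/x_2 < p/q, where a_1, a_2 are the first two greedy denominators. -/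
theorem master (k n : ℕ) (A x1 x2 : ℤ) (hk : 1 ≤ k) (hn : 1 ≤ n)
    (hA1 : A * (k:ℤ) ≤ ((n:ℤ)*((k:ℤ)+1)+1)*((n:ℤ)+1))
    (hA2 : ((n:ℤ)*((k:ℤ)+1)+1)*((n:ℤ)+1) < (A+1) * (k:ℤ))
    (hx1 : 2 ≤ x1) (hx12 : x1 ≤ x2)
    (h1 : (((n:ℤ)+1)+(A+1)) * (x1*x2) < (x1+x2) * (((n:ℤ)+1)*(A+1)))
    (h2 : (x1+x2) * ((n:ℤ)*((k:ℤ)+1)+1) < ((k:ℤ)+1) * (x1*x2)) :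
    ∃ p q : ℕ, 0 < p ∧ p < q ∧
      (p ∣ q + k ∧ ∀ m : ℕ, 0 < m → m < k → ¬ p ∣ q + m) ∧
      ∀ a₁ a₂ : ℤ, a₁ = ⌊(q:ℝ)/p⌋ + 1 →
        a₂ = ⌊((p:ℝ)/q - 1/(a₁:ℝ))⁻¹⌋ + 1 →
        ∃ x₁ x₂ : ℤ, 2 ≤ x₁ ∧ x₁ ≤ x₂ ∧
          1/(a₁:ℝ) + 1/(a₂:ℝ) < (1:ℝ)/x₁ + 1/x₂ ∧
          (1:ℝ)/x₁ + 1/x₂ < (p:ℝ)/q := by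
  have hkZ : (1:ℤ) ≤ (k:ℤ) := by exact_mod_cast hk
  have hnZ : (1:ℤ) ≤ (n:ℤ) := by exact_mod_cast hn
  have hqZ : (0:ℤ) < (n:ℤ)*((k:ℤ)+1)+1 := by nlinarith
  have hApos : (0:ℤ) < A + 1 := by nlinarith
  refine ⟨k+1, n*(k+1)+1, Nat.succ_pos k, ?_, ⟨⟨n+1, by ring⟩, ?_⟩, ?_⟩
  · have h := Nat.mul_le_mul_right (k+1) hn
    omega
  · intro m hm hmk hdvd
    have hq : n*(k+1)+1+m = (k+1)*n + (1+m) := by ring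
    rw [hq] at hdvd
    have h2 : (k+1) ∣ (1+m) := (Nat.dvd_add_right ⟨n, rfl⟩).mp hdvd
    have := Nat.le_of_dvd (by omega) h2
    omega
  · intro a₁ a₂ e₁ e₂
    have hkR : (0:ℝ) < (k:ℝ) := by exact_mod_cast hk
    have hqR : (0:ℝ) < ((n*(k+1)+1 : ℕ):ℝ) := by positivity
    have hf1 : ⌊((n*(k+1)+1 : ℕ):ℝ)/((k+1 : ℕ):ℝ)⌋ = (n:ℤ) := by
      rw [Int.floor_eq_iff]
      have hp : (0:ℝ) < ((k+1:ℕ):ℝ) := by positivity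
      constructor
      · rw [le_div_iff₀ hp]; push_cast; nlinarith
      · rw [div_lt_iff₀ hp]; push_cast; nlinarith
    rw [hf1] at e₁
    have key : (((k+1:ℕ):ℝ)/((n*(k+1)+1 : ℕ):ℝ) - 1/(((n:ℤ)+1 : ℤ):ℝ))⁻¹
        = ((n*(k+1)+1 : ℕ):ℝ)*((n:ℝ)+1)/(k:ℝ) := by
      have hn1 : (0:ℝ) < (n:ℝ)+1 := by positivity
      have hsub : ((k+1:ℕ):ℝ)/((n*(k+1)+1 : ℕ):ℝ) - 1/(((n:ℤ)+1 : ℤ):ℝ)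
          = (k:ℝ)/(((n*(k+1)+1 : ℕ):ℝ)*((n:ℝ)+1)) := by
        push_cast
        field_simp
        ring
      rw [hsub, inv_div]
    have hf2 : ⌊((n*(k+1)+1 : ℕ):ℝ)*((n:ℝ)+1)/(k:ℝ)⌋ = A := by
      rw [Int.floor_eq_iff]
      constructor
      · rw [le_div_iff₀ hkR]
        have : (A * (k:ℤ) : ℝ) ≤ (((n:ℤ)*((k:ℤ)+1)+1)*((n:ℤ)+1) : ℝ) := by exact_mod_cast hA1
        push_cast at this ⊢; nlinarith
      · rw [div_lt_iff₀ hkR]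
        have : ((((n:ℤ)*((k:ℤ)+1)+1)*((n:ℤ)+1) : ℤ) : ℝ) < ((A+1) * (k:ℤ) : ℝ) := by exact_mod_cast hA2
        push_cast at this ⊢; nlinarith
    rw [e₁] at e₂
    rw [key, hf2] at e₂
    refine ⟨x1, x2, hx1, hx12, ?_, ?_⟩
    · rw [e₁, e₂]
      have hx1R : (0:ℝ) < (x1:ℝ) := by exact_mod_cast lt_of_lt_of_le (by norm_num) hx1
      have hx2R : (0:ℝ) < (x2:ℝ) := lt_of_lt_of_le hx1R (by exact_mod_cast hx12)
      have ha1R : (0:ℝ) < ((n:ℤ)+1 : ℤ) := by exact_mod_cast (by linarith : (0:ℤ) < (n:ℤ)+1)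
      have ha2R : (0:ℝ) < ((A+1 : ℤ) : ℝ) := by exact_mod_cast hApos
      have h1R : (((n:ℤ)+1 : ℤ):ℝ) + ((A+1 : ℤ):ℝ) > 0 := by positivity
      rw [div_add_div _ _ (ne_of_gt (by exact_mod_cast ha1R)) (ne_of_gt ha2R),
          div_add_div _ _ (ne_of_gt hx1R) (ne_of_gt hx2R),
          div_lt_div_iff₀ (by positivity) (by positivity)]
      have hcast : ((((n:ℤ)+1)+(A+1)) * (x1*x2) : ℝ) < ((x1+x2) * (((n:ℤ)+1)*(A+1)) : ℝ) := by
        exact_mod_cast h1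
      push_cast at hcast ⊢
      nlinarith [hcast]
    · rw [e₁] at *
      have hx1R : (0:ℝ) < (x1:ℝ) := by exact_mod_cast lt_of_lt_of_le (by norm_num) hx1
      have hx2R : (0:ℝ) < (x2:ℝ) := lt_of_lt_of_le hx1R (by exact_mod_cast hx12)
      rw [div_add_div _ _ (ne_of_gt hx1R) (ne_of_gt hx2R),
          div_lt_div_iff₀ (by positivity) hqR]
      have hcast : ((x1+x2) * ((n:ℤ)*((k:ℤ)+1)+1) : ℝ) < (((k:ℤ)+1) * (x1*x2) : ℝ) := by
        exact_mod_cast h2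
      push_cast at hcast ⊢
      nlinarith [hcast]

theorem stmt_7 (k : ℕ) (hk : 4 ≤ k) :
    ∃ p q : ℕ, 0 < p ∧ p < q ∧
      (p ∣ q + k ∧ ∀ m : ℕ, 0 < m → m < k → ¬ p ∣ q + m) ∧
      ∀ a₁ a₂ : ℤ, a₁ = ⌊(q:ℝ)/p⌋ + 1 →
        a₂ = ⌊((p:ℝ)/q - 1/(a₁:ℝ))⁻¹⌋ + 1 →
        ∃ x₁ x₂ : ℤ, 2 ≤ x₁ ∧ x₁ ≤ x₂ ∧
          1/(a₁:ℝ) + 1/(a₂:ℝ) < (1:ℝ)/x₁ + 1/x₂ ∧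
          (1:ℝ)/x₁ + 1/x₂ < (p:ℝ)/q := by
  rcases lt_or_ge k 65 with hsmall | hbig
  · interval_cases k
    · exact master 4 2 8 4 5 (by norm_num) (by norm_num) (by norm_num) (by norm_num) (by norm_num) (by norm_num) (by norm_num) (by norm_num)
    · exact master 5 8 88 13 22 (by norm_num) (by norm_num) (by norm_num) (by norm_num) (by norm_num) (by norm_num) (by norm_num) (by norm_num)
    · exact master 6 6 50 10 16 (by norm_num) (by norm_num) (by norm_num) (by norm_num) (by norm_num) (by norm_num) (by norm_num) (by norm_num)
    · exact master 7 55 3528 57 1676 (by norm_num) (by norm_num) (by norm_num) (by norm_num) (by norm_num) (by norm_num) (by norm_num) (by norm_num)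
    · exact master 8 4 23 7 10 (by norm_num) (by norm_num) (by norm_num) (by norm_num) (by norm_num) (by norm_num) (by norm_num) (by norm_num)
    · exact master 9 4 22 6 13 (by norm_num) (by norm_num) (by norm_num) (by norm_num) (by norm_num) (by norm_num) (by norm_num) (by norm_num)
    · exact master 10 4 22 6 13 (by norm_num) (by norm_num) (by norm_num) (by norm_num) (by norm_num) (by norm_num) (by norm_num) (by norm_num)
    · exact master 11 4 22 6 13 (by norm_num) (by norm_num) (by norm_num) (by norm_num) (by norm_num) (by norm_num) (by norm_num) (by norm_num)
    · exact master 12 4 22 6 13 (by norm_num) (by norm_num) (by norm_num) (by norm_num) (by norm_num) (by norm_num) (by norm_num) (by norm_num)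
    · exact master 13 3 13 5 8 (by norm_num) (by norm_num) (by norm_num) (by norm_num) (by norm_num) (by norm_num) (by norm_num) (by norm_num)
    · exact master 14 3 13 5 8 (by norm_num) (by norm_num) (by norm_num) (by norm_num) (by norm_num) (by norm_num) (by norm_num) (by norm_num)
    · exact master 15 3 13 5 8 (by norm_num) (by norm_num) (by norm_num) (by norm_num) (by norm_num) (by norm_num) (by norm_num) (by norm_num)
    · exact master 16 3 13 5 8 (by norm_num) (by norm_num) (by norm_num) (by norm_num) (by norm_num) (by norm_num) (by norm_num) (by norm_num)
    · exact master 17 11 140 13 74 (by norm_num) (by norm_num) (by norm_num) (by norm_num) (by norm_num) (by norm_num) (by norm_num) (by norm_num)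
    · exact master 18 10 116 12 62 (by norm_num) (by norm_num) (by norm_num) (by norm_num) (by norm_num) (by norm_num) (by norm_num) (by norm_num)
    · exact master 19 10 116 12 62 (by norm_num) (by norm_num) (by norm_num) (by norm_num) (by norm_num) (by norm_num) (by norm_num) (by norm_num)
    · exact master 20 8 76 11 30 (by norm_num) (by norm_num) (by norm_num) (by norm_num) (by norm_num) (by norm_num) (by norm_num) (by norm_num)
    · exact master 21 10 115 16 27 (by norm_num) (by norm_num) (by norm_num) (by norm_num) (by norm_num) (by norm_num) (by norm_num) (by norm_num)
    · exact master 22 10 115 16 27 (by norm_num) (by norm_num) (by norm_num) (by norm_num) (by norm_num) (by norm_num) (by norm_num) (by norm_num)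
    · exact master 23 10 115 16 27 (by norm_num) (by norm_num) (by norm_num) (by norm_num) (by norm_num) (by norm_num) (by norm_num) (by norm_num)
    · exact master 24 10 115 16 27 (by norm_num) (by norm_num) (by norm_num) (by norm_num) (by norm_num) (by norm_num) (by norm_num) (by norm_num)
    · exact master 25 5 31 7 18 (by norm_num) (by norm_num) (by norm_num) (by norm_num) (by norm_num) (by norm_num) (by norm_num) (by norm_num)
    · exact master 26 5 31 7 18 (by norm_num) (by norm_num) (by norm_num) (by norm_num) (by norm_num) (by norm_num) (by norm_num) (by norm_num)
    · exact master 27 5 31 7 18 (by norm_num) (by norm_num) (by norm_num) (by norm_num) (by norm_num) (by norm_num) (by norm_num) (by norm_num)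
    · exact master 28 5 31 7 18 (by norm_num) (by norm_num) (by norm_num) (by norm_num) (by norm_num) (by norm_num) (by norm_num) (by norm_num)
    · exact master 29 5 31 7 18 (by norm_num) (by norm_num) (by norm_num) (by norm_num) (by norm_num) (by norm_num) (by norm_num) (by norm_num)
    · exact master 30 5 31 7 18 (by norm_num) (by norm_num) (by norm_num) (by norm_num) (by norm_num) (by norm_num) (by norm_num) (by norm_num)
    · exact master 31 5 31 7 18 (by norm_num) (by norm_num) (by norm_num) (by norm_num) (by norm_num) (by norm_num) (by norm_num) (by norm_num)
    · exact master 32 5 31 7 18 (by norm_num) (by norm_num) (by norm_num) (by norm_num) (by norm_num) (by norm_num) (by norm_num) (by norm_num)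
    · exact master 33 5 31 7 18 (by norm_num) (by norm_num) (by norm_num) (by norm_num) (by norm_num) (by norm_num) (by norm_num) (by norm_num)
    · exact master 34 5 31 7 18 (by norm_num) (by norm_num) (by norm_num) (by norm_num) (by norm_num) (by norm_num) (by norm_num) (by norm_num)
    · exact master 35 5 31 7 18 (by norm_num) (by norm_num) (by norm_num) (by norm_num) (by norm_num) (by norm_num) (by norm_num) (by norm_num)
    · exact master 36 5 31 7 18 (by norm_num) (by norm_num) (by norm_num) (by norm_num) (by norm_num) (by norm_num) (by norm_num) (by norm_num)
    · exact master 37 8 74 13 21 (by norm_num) (by norm_num) (by norm_num) (by norm_num) (by norm_num) (by norm_num) (by norm_num) (by norm_num)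
    · exact master 38 8 74 13 21 (by norm_num) (by norm_num) (by norm_num) (by norm_num) (by norm_num) (by norm_num) (by norm_num) (by norm_num)
    · exact master 39 8 74 13 21 (by norm_num) (by norm_num) (by norm_num) (by norm_num) (by norm_num) (by norm_num) (by norm_num) (by norm_num)
    · exact master 40 8 74 13 21 (by norm_num) (by norm_num) (by norm_num) (by norm_num) (by norm_num) (by norm_num) (by norm_num) (by norm_num)
    · exact master 41 7 57 9 32 (by norm_num) (by norm_num) (by norm_num) (by norm_num) (by norm_num) (by norm_num) (by norm_num) (by norm_num)
    · exact master 42 7 57 9 32 (by norm_num) (by norm_num) (by norm_num) (by norm_num) (by norm_num) (by norm_num) (by norm_num) (by norm_num)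
    · exact master 43 7 57 9 32 (by norm_num) (by norm_num) (by norm_num) (by norm_num) (by norm_num) (by norm_num) (by norm_num) (by norm_num)
    · exact master 44 7 57 9 32 (by norm_num) (by norm_num) (by norm_num) (by norm_num) (by norm_num) (by norm_num) (by norm_num) (by norm_num)
    · exact master 45 7 57 9 32 (by norm_num) (by norm_num) (by norm_num) (by norm_num) (by norm_num) (by norm_num) (by norm_num) (by norm_num)
    · exact master 46 7 57 9 32 (by norm_num) (by norm_num) (by norm_num) (by norm_num) (by norm_num) (by norm_num) (by norm_num) (by norm_num)
    · exact master 47 7 57 9 32 (by norm_num) (by norm_num) (by norm_num) (by norm_num) (by norm_num) (by norm_num) (by norm_num) (by norm_num)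
    · exact master 48 7 57 9 32 (by norm_num) (by norm_num) (by norm_num) (by norm_num) (by norm_num) (by norm_num) (by norm_num) (by norm_num)
    · exact master 49 7 57 9 32 (by norm_num) (by norm_num) (by norm_num) (by norm_num) (by norm_num) (by norm_num) (by norm_num) (by norm_num)
    · exact master 50 7 57 9 32 (by norm_num) (by norm_num) (by norm_num) (by norm_num) (by norm_num) (by norm_num) (by norm_num) (by norm_num)
    · exact master 51 7 57 9 32 (by norm_num) (by norm_num) (by norm_num) (by norm_num) (by norm_num) (by norm_num) (by norm_num) (by norm_num)
    · exact master 52 7 57 9 32 (by norm_num) (by norm_num) (by norm_num) (by norm_num) (by norm_num) (by norm_num) (by norm_num) (by norm_num)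
    · exact master 53 7 57 9 32 (by norm_num) (by norm_num) (by norm_num) (by norm_num) (by norm_num) (by norm_num) (by norm_num) (by norm_num)
    · exact master 54 7 57 9 32 (by norm_num) (by norm_num) (by norm_num) (by norm_num) (by norm_num) (by norm_num) (by norm_num) (by norm_num)
    · exact master 55 7 57 9 32 (by norm_num) (by norm_num) (by norm_num) (by norm_num) (by norm_num) (by norm_num) (by norm_num) (by norm_num)
    · exact master 56 7 57 9 32 (by norm_num) (by norm_num) (by norm_num) (by norm_num) (by norm_num) (by norm_num) (by norm_num) (by norm_num)
    · exact master 57 7 57 9 32 (by norm_num) (by norm_num) (by norm_num) (by norm_num) (by norm_num) (by norm_num) (by norm_num) (by norm_num)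
    · exact master 58 7 57 9 32 (by norm_num) (by norm_num) (by norm_num) (by norm_num) (by norm_num) (by norm_num) (by norm_num) (by norm_num)
    · exact master 59 7 57 9 32 (by norm_num) (by norm_num) (by norm_num) (by norm_num) (by norm_num) (by norm_num) (by norm_num) (by norm_num)
    · exact master 60 7 57 9 32 (by norm_num) (by norm_num) (by norm_num) (by norm_num) (by norm_num) (by norm_num) (by norm_num) (by norm_num)
    · exact master 61 7 57 9 32 (by norm_num) (by norm_num) (by norm_num) (by norm_num) (by norm_num) (by norm_num) (by norm_num) (by norm_num)
    · exact master 62 7 57 9 32 (by norm_num) (by norm_num) (by norm_num) (by norm_num) (by norm_num) (by norm_num) (by norm_num) (by norm_num)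
    · exact master 63 7 57 9 32 (by norm_num) (by norm_num) (by norm_num) (by norm_num) (by norm_num) (by norm_num) (by norm_num) (by norm_num)
    · exact master 64 7 57 9 32 (by norm_num) (by norm_num) (by norm_num) (by norm_num) (by norm_num) (by norm_num) (by norm_num) (by norm_num)
  · -- general case k ≥ 65
    set j := Nat.sqrt (k-1) / 2 with hj
    have hs8 : 8 ≤ Nat.sqrt (k-1) := Nat.le_sqrt.mpr (by omega)
    have hj4 : 4 ≤ j := by omega
    have hlow : 2*j*(2*j) ≤ k - 1 := by
      have h1 : 2*j ≤ Nat.sqrt (k-1) := by omega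
      calc 2*j*(2*j) ≤ Nat.sqrt (k-1) * Nat.sqrt (k-1) := Nat.mul_le_mul h1 h1
        _ ≤ k - 1 := Nat.sqrt_le (k-1)
    have hhigh : k ≤ (2*j+2)*(2*j+2) := by
      have h1 : Nat.sqrt (k-1) ≤ 2*j+1 := by omega
      have h2 : k - 1 < (Nat.sqrt (k-1) + 1) * (Nat.sqrt (k-1) + 1) := Nat.lt_succ_sqrt (k-1)
      have h3 : (Nat.sqrt (k-1) + 1) * (Nat.sqrt (k-1) + 1) ≤ (2*j+2)*(2*j+2) :=
        Nat.mul_le_mul (by omega) (by omega)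
      have h4 : k - 1 < (2*j+2)*(2*j+2) := lt_of_lt_of_le h2 h3
      omega
    have hkj : 4*(j*j) + 1 ≤ k := by
      calc 4*(j*j)+1 = 2*j*(2*j)+1 := by ring
        _ ≤ (k-1)+1 := Nat.add_le_add_right hlow 1
        _ = k := by omega
    have hkjZ : 4*((j:ℤ)*(j:ℤ)) + 1 ≤ (k:ℤ) := by exact_mod_cast hkj
    have hhighZ : (k:ℤ) ≤ (2*(j:ℤ)+2)*(2*(j:ℤ)+2) := by exact_mod_cast hhigh
    have hj4Z : (4:ℤ) ≤ (j:ℤ) := by exact_mod_cast hj4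
    have e1 : ((2*j+1 : ℕ) : ℤ) = 2*(j:ℤ)+1 := by push_cast; ring
    refine master k (2*j+1) ((2*(j:ℤ)+1)*(2*(j:ℤ)+2)+1) (2*(j:ℤ)+3) (2*((j:ℤ)+1)^2)
      (by omega) (by omega) ?_ ?_ (by nlinarith) (by nlinarith) ?_ ?_
    · rw [e1]; nlinarith
    · rw [e1]; nlinarith
    · rw [e1]
      have hid : ((2*(j:ℤ)+3)+(2*((j:ℤ)+1)^2)) * ((2*(j:ℤ)+1+1)*((2*(j:ℤ)+1)*(2*(j:ℤ)+2)+1+1))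
          = ((2*(j:ℤ)+1+1)+((2*(j:ℤ)+1)*(2*(j:ℤ)+2)+1+1)) * ((2*(j:ℤ)+3)*(2*((j:ℤ)+1)^2))
            + 4*((j:ℤ)+1) := by ring
      nlinarith [hid]
    · rw [e1]
      have hid : ((k:ℤ)+1) * ((2*(j:ℤ)+3)*(2*((j:ℤ)+1)^2))
          - ((2*(j:ℤ)+3)+(2*((j:ℤ)+1)^2)) * ((2*(j:ℤ)+1)*((k:ℤ)+1)+1)
          = (k:ℤ) - 2*(j:ℤ)^2 - 6*(j:ℤ) - 4 := by ring
      nlinarith [hid]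
end

section
/- Let θ ∈ (0,1] with greedy sequence (a_n), errors e_m = θ − Σ_{n=1}^m 1/a_n, and fix N ∈ ℕ. If a_{m+1} ≥ N·a_m² − a_m + 1, then b_m = N·a_m, where N/b_m is the largest fraction with numerator N strictly smaller than e_{m−1} (equivalently, 1/a_m = N/b_m). -/
/-!
Write `e_k` for the error left after the first `k - 1` greedy terms. The greedy choice
`a_k = ⌊1/e_k⌋ + 1` gives `1/a_k < e_k ≤ 1/(a_k - 1)`, so the errors stay in `(0, 1]`.
Hence `e_m = 1/a_m + e_{m+1} ≤ 1/a_m + 1/(a_{m+1} - 1)`, and the growth hypothesis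
`a_{m+1} - 1 ≥ a_m (N a_m - 1)` turns this into `e_m ≤ N/(N a_m - 1)`. Together with
`N/(N a_m) = 1/a_m < e_m` this pins down `N a_m` as the least `b` with `N/b < e_m`.
-/

lemma one_le_floor_one_div {x : ℝ} (hx : 0 < x) (hx1 : x ≤ 1) : 1 ≤ ⌊1 / x⌋ := by
  rw [Int.le_floor, Int.cast_one, le_div_iff₀ hx]
  linarith

lemma one_div_floor_one_div_add_one_lt {x : ℝ} (hx : 0 < x) :
    1 / ((⌊1 / x⌋ + 1 : ℤ) : ℝ) < x := by
  have hpos : (0 : ℝ) < ((⌊1 / x⌋ + 1 : ℤ) : ℝ) := by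
    have : 0 ≤ ⌊1 / x⌋ := Int.floor_nonneg.mpr (by positivity)
    exact_mod_cast (by omega : 0 < ⌊1 / x⌋ + 1)
  rw [one_div_lt hpos hx, Int.cast_add, Int.cast_one]
  exact Int.lt_floor_add_one _

lemma le_one_div_floor_one_div {x : ℝ} (hx : 0 < x) (hx1 : x ≤ 1) :
    x ≤ 1 / (⌊1 / x⌋ : ℝ) := by
  have hpos : (0 : ℝ) < ⌊1 / x⌋ := by exact_mod_cast one_le_floor_one_div hx hx1
  rw [le_one_div hx hpos]
  exact Int.floor_le _

lemma one_div_add_one_div_le {N A B : ℝ} (hA : 0 < A) (hNA : 1 < N * A)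
    (hB : A * (N * A - 1) ≤ B) : 1 / A + 1 / B ≤ N / (N * A - 1) := by
  have hNA' : 0 < N * A - 1 := by linarith
  calc 1 / A + 1 / B ≤ 1 / A + 1 / (A * (N * A - 1)) := by gcongr
    _ = N / (N * A - 1) := by
      rw [div_add_div _ _ hA.ne' (by positivity), div_eq_div_iff (by positivity) hNA'.ne']
      ring

lemma isLeast_num_div_lt {x : ℝ} {N : ℕ} {A : ℤ} (hN : 1 ≤ N) (hA : 1 ≤ A)
    (hlow : 1 / (A : ℝ) < x) (hup : x ≤ N / (N * A - 1)) :
    IsLeast {b : ℤ | 0 < b ∧ (N : ℝ) / b < x} (N * A) := by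
  have hNR : (0 : ℝ) < N := by exact_mod_cast hN
  refine ⟨⟨by positivity, ?_⟩, fun b ⟨hb0, hbx⟩ => ?_⟩
  · rwa [Int.cast_mul, Int.cast_natCast, div_mul_cancel_left₀ hNR.ne', ← one_div]
  · by_contra! hlt
    have hb : (b : ℝ) ≤ N * A - 1 := by exact_mod_cast (by omega : b ≤ N * A - 1)
    have hb0 : (0 : ℝ) < b := by exact_mod_cast hb0
    have : (N : ℝ) / (N * A - 1) ≤ N / b := div_le_div_of_nonneg_left hNR.le hb0 hb
    linarith

/-- The error `e_k = θ - ∑_{n=1}^{k-1} 1/a_n`, i.e. `e_{k-1}` in the paper's indexing. -/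
noncomputable def greedyError (θ : ℝ) (a : ℕ → ℤ) (k : ℕ) : ℝ :=
  θ - ∑ n ∈ Finset.Ico 1 k, (1 : ℝ) / a n

section Greedy

variable {θ : ℝ} {a : ℕ → ℤ}

lemma greedyError_one : greedyError θ a 1 = θ := by
  simp [greedyError]

lemma greedyError_succ {k : ℕ} (hk : 1 ≤ k) :
    greedyError θ a (k + 1) = greedyError θ a k - 1 / a k := by
  rw [greedyError, greedyError, Finset.sum_Ico_succ_top hk]
  ring

variable (hgreedy : ∀ k, 1 ≤ k → a k = ⌊1 / greedyError θ a k⌋ + 1)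
include hgreedy

lemma greedyError_mem_Ioc (hθ : θ ∈ Set.Ioc 0 1) {k : ℕ} (hk : 1 ≤ k) :
    greedyError θ a k ∈ Set.Ioc 0 1 := by
  induction k, hk using Nat.le_induction with
  | base => rwa [greedyError_one]
  | succ k hk ih =>
    have hlt : 1 / (a k : ℝ) < greedyError θ a k := by
      rw [hgreedy k hk]; exact one_div_floor_one_div_add_one_lt ih.1
    have hpos : (0 : ℝ) < 1 / a k := by
      have : 0 ≤ ⌊1 / greedyError θ a k⌋ := Int.floor_nonneg.mpr (by simpa using ih.1.le)
      rw [hgreedy k hk, one_div_pos]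
      exact_mod_cast (by omega : 0 < ⌊1 / greedyError θ a k⌋ + 1)
    rw [greedyError_succ hk]
    exact ⟨by linarith, by linarith [ih.2]⟩

lemma greedyError_le_of_growth (hθ : θ ∈ Set.Ioc 0 1) {N : ℕ} (hN : 1 ≤ N) {m : ℕ}
    (hm : 1 ≤ m) (h : a (m + 1) ≥ N * a m ^ 2 - a m + 1) :
    greedyError θ a m ≤ N / (N * a m - 1) := by
  obtain ⟨he0, he1⟩ := greedyError_mem_Ioc hgreedy hθ hm
  obtain ⟨he0', he1'⟩ := greedyError_mem_Ioc hgreedy hθ (by omega : 1 ≤ m + 1)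
  have ha : 2 ≤ a m := by
    have := one_le_floor_one_div he0 he1
    rw [hgreedy m hm]; omega
  have hnext : greedyError θ a (m + 1) ≤ 1 / ((a (m + 1) : ℝ) - 1) := by
    rw [hgreedy (m + 1) (by omega), Int.cast_add, Int.cast_one, add_sub_cancel_right]
    exact le_one_div_floor_one_div he0' he1'
  have haR : (2 : ℝ) ≤ a m := by exact_mod_cast ha
  have hNR : (1 : ℝ) ≤ N := by exact_mod_cast hN
  have hgrowth : (a m : ℝ) * (N * a m - 1) ≤ (a (m + 1) : ℝ) - 1 := by
    have h' : ((N * a m ^ 2 - a m + 1 : ℤ) : ℝ) ≤ a (m + 1) := by exact_mod_cast h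
    push_cast at h'
    linarith [show (a m : ℝ) * (N * a m - 1) = N * a m ^ 2 - a m by ring]
  calc greedyError θ a m = 1 / a m + greedyError θ a (m + 1) := by
        rw [greedyError_succ hm]; ring
    _ ≤ 1 / a m + 1 / ((a (m + 1) : ℝ) - 1) := by gcongr
    _ ≤ N / (N * a m - 1) := one_div_add_one_div_le (by linarith) (by nlinarith) hgrowth

end Greedy

theorem stmt_8 (θ : ℝ) (hθ : θ ∈ Set.Ioc (0:ℝ) 1) (a : ℕ → ℤ)
    (ha1 : a 1 = ⌊1/θ⌋ + 1)
    (harec : ∀ k, 2 ≤ k →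
      a k = ⌊1/(θ - ∑ n ∈ Finset.Ico 1 k, (1:ℝ)/(a n))⌋ + 1)
    (N : ℕ) (hN : 1 ≤ N) (m : ℕ) (hm : 1 ≤ m)
    (h : a (m+1) ≥ N * (a m)^2 - a m + 1) :
    IsLeast {b : ℤ | 0 < b ∧ (N:ℝ)/b < θ - ∑ n ∈ Finset.Ico 1 m, (1:ℝ)/(a n)}
      (N * a m) := by
  have hgreedy : ∀ k, 1 ≤ k → a k = ⌊1 / greedyError θ a k⌋ + 1 := by
    intro k hk
    rcases hk.eq_or_lt with rfl | hk
    · rwa [greedyError_one]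
    · exact harec k hk
  have he := greedyError_mem_Ioc hgreedy hθ hm
  have ha : 1 ≤ a m := by
    have := one_le_floor_one_div he.1 he.2
    rw [hgreedy m hm]; omega
  have hlow : 1 / (a m : ℝ) < greedyError θ a m := by
    rw [hgreedy m hm]; exact one_div_floor_one_div_add_one_lt he.1
  exact isLeast_num_div_lt hN ha hlow (greedyError_le_of_growth hgreedy hθ hN hm h)
end

section
/- Let θ ∈ (0,1] with greedy sequence (a_n), errors e_m = θ − Σ_{n=1}^m 1/a_n, and fix N ∈ ℕ. If the largest fraction with numerator N strictly less than e_{m−1} is N/(N a_m) = 1/a_m, then Φ(e_{m−1}) ≥ N, where Φ(x) = 1/(G(x) − 1/x) and G(x) = ⌊1/x⌋ + 1. -/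
theorem stmt_9 (θ : ℝ) (hθ : θ ∈ Set.Ioc (0:ℝ) 1) (a : ℕ → ℤ)
    (ha1 : a 1 = ⌊1/θ⌋ + 1)
    (harec : ∀ k, 2 ≤ k →
      a k = ⌊1/(θ - ∑ n ∈ Finset.Ico 1 k, (1:ℝ)/(a n))⌋ + 1)
    (N : ℕ) (hN : 1 ≤ N) (m : ℕ) (hm : 1 ≤ m)
    (h : IsLeast {b : ℤ | 0 < b ∧ (N:ℝ)/b < θ - ∑ n ∈ Finset.Ico 1 m, (1:ℝ)/(a n)}
      (N * a m)) :
    (N : ℝ) ≤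
      1 / ((⌊1/(θ - ∑ n ∈ Finset.Ico 1 m, (1:ℝ)/(a n))⌋ : ℝ) + 1
        - 1/(θ - ∑ n ∈ Finset.Ico 1 m, (1:ℝ)/(a n))) := by
  set e : ℝ := θ - ∑ n ∈ Finset.Ico 1 m, (1:ℝ)/(a n) with he
  obtain ⟨⟨hpos, hlt⟩, hmin⟩ := h
  have ham : a m = ⌊1/e⌋ + 1 := by
    rcases eq_or_lt_of_le hm with hm1 | hm2
    · have : m = 1 := hm1.symm
      subst this
      simpa [he] using ha1
    · exact harec m hm2
  have hNpos : (0:ℝ) < N := by exact_mod_cast hN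
  have hNam : (0:ℝ) < (N:ℝ) * (a m : ℝ) := by exact_mod_cast hpos
  have hlt' : (N:ℝ) / ((N:ℝ) * (a m : ℝ)) < e := by push_cast at hlt; exact hlt
  have hepos : (0:ℝ) < e := lt_trans (div_pos hNpos hNam) hlt'
  have hflt : (1:ℝ)/e < (⌊1/e⌋ : ℝ) + 1 := Int.lt_floor_add_one _
  have hden : (0:ℝ) < (⌊1/e⌋ : ℝ) + 1 - 1/e := by linarith
  rw [le_div_iff₀ hden]
  -- key: N * ((⌊1/e⌋+1) - 1/e) ≤ 1, i.e. N * a m - N/e ≤ 1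
  have hcast : ((a m : ℤ) : ℝ) = (⌊1/e⌋ : ℝ) + 1 := by exact_mod_cast ham
  rcases le_or_gt ((N:ℤ) * a m) 1 with hle | hgt
  · -- then N * a m ≤ 1 so N*(a m) - N/e ≤ 1 - N/e ≤ 1
    have h1 : (N:ℝ) * ((a m : ℤ):ℝ) ≤ 1 := by exact_mod_cast hle
    have h2 : 0 < (N:ℝ)/e := div_pos hNpos hepos
    rw [hcast] at h1
    have : (N:ℝ) * ((⌊1/e⌋:ℝ) + 1 - 1/e) = (N:ℝ) * ((⌊1/e⌋:ℝ) + 1) - (N:ℝ)/e := by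
      ring
    rw [this]
    linarith
  · -- N * a m - 1 > 0, use minimality
    have hnotmem : (N:ℤ) * a m - 1 ∉ {b : ℤ | 0 < b ∧ (N:ℝ)/b < e} := by
      intro hmem
      have := hmin hmem
      omega
    have hb : (0:ℤ) < (N:ℤ) * a m - 1 := by omega
    have hge : e ≤ (N:ℝ) / (((N:ℤ) * a m - 1 : ℤ) : ℝ) := by
      by_contra hc
      push_neg at hc
      exact hnotmem ⟨hb, hc⟩
    have hbR : (0:ℝ) < (((N:ℤ) * a m - 1 : ℤ) : ℝ) := by exact_mod_cast hb
    have h3 : e * (((N:ℤ) * a m - 1 : ℤ) : ℝ) ≤ N := by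
      rw [div_eq_mul_inv] at hge
      calc e * (((N:ℤ) * a m - 1 : ℤ) : ℝ)
          ≤ ((N:ℝ) * (((N:ℤ) * a m - 1 : ℤ) : ℝ)⁻¹) * (((N:ℤ) * a m - 1 : ℤ) : ℝ) := by
            exact mul_le_mul_of_nonneg_right hge hbR.le
        _ = N := by rw [mul_assoc, inv_mul_cancel₀ hbR.ne', mul_one]
    have hcast2 : (((N:ℤ) * a m - 1 : ℤ) : ℝ) = (N:ℝ) * ((⌊1/e⌋:ℝ) + 1) - 1 := by
      push_cast [ham]
      ring
    rw [hcast2] at h3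
    -- e * (N*(f+1) - 1) ≤ N  ⟹  N*(f+1-1/e) ≤ 1  (divide by e)
    have : (N:ℝ) * ((⌊1/e⌋:ℝ) + 1 - 1/e) = (e * ((N:ℝ) * ((⌊1/e⌋:ℝ) + 1) - 1) - (N:ℝ)) / e + 1 := by
      field_simp
      ring
    rw [this]
    have h4 : (e * ((N:ℝ) * ((⌊1/e⌋:ℝ) + 1) - 1) - (N:ℝ)) / e ≤ 0 :=
      div_nonpos_of_nonpos_of_nonneg (by linarith) hepos.le
    linarith
end

section
/- Let θ ∈ (0,1] with greedy sequence (a_n), errors e_m = θ − Σ_{n=1}^m 1/a_n, and fix N ∈ ℕ. If e_{m−1} ≤ N/(N a_m − 1), then a_{m+1} ≥ N a_m² − a_m + 1. -/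
theorem stmt_10 (θ : ℝ) (hθ : θ ∈ Set.Ioc (0:ℝ) 1) (a : ℕ → ℤ)
    (ha1 : a 1 = ⌊1/θ⌋ + 1)
    (harec : ∀ k, 2 ≤ k →
      a k = ⌊1/(θ - ∑ n ∈ Finset.Ico 1 k, (1:ℝ)/(a n))⌋ + 1)
    (N : ℕ) (hN : 1 ≤ N) (m : ℕ) (hm : 1 ≤ m)
    (h : θ - ∑ n ∈ Finset.Ico 1 m, (1:ℝ)/(a n) ≤ (N:ℝ)/(N * (a m : ℝ) - 1)) :
    a (m+1) ≥ N * (a m)^2 - a m + 1 := by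
  obtain ⟨hθ0, hθ1⟩ := hθ
  set E : ℕ → ℝ := fun k => θ - ∑ n ∈ Finset.Ico 1 k, (1:ℝ)/(a n) with hE
  clear_value E
  have hE1 : E 1 = θ := by simp [hE]
  have hak : ∀ k, 1 ≤ k → a k = ⌊1/E k⌋ + 1 := by
    intro k hk
    rcases eq_or_lt_of_le hk with h1 | h2
    · rw [← h1]; simpa [hE] using ha1
    · simp only [hE]; exact harec k h2
  have hEstep : ∀ k, 1 ≤ k → E (k+1) = E k - 1/(a k) := by
    intro k hk
    simp only [hE, Finset.sum_Ico_succ_top hk]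
    ring
  have hstep : ∀ k, 1 ≤ k → 0 < E k → 0 < (a k : ℝ) ∧ 1/(a k : ℝ) < E k := by
    intro k hk hEk
    have hcast : ((a k : ℝ)) = (⌊1/E k⌋ : ℝ) + 1 := by exact_mod_cast hak k hk
    have hinv : 1/E k < (a k : ℝ) := by
      rw [hcast]; exact Int.lt_floor_add_one _
    have hinvpos : 0 < 1/E k := by positivity
    have hapos : 0 < (a k : ℝ) := lt_trans hinvpos hinv
    constructor
    · exact hapos
    · rw [div_lt_iff₀ hEk] at hinv
      rw [div_lt_iff₀ hapos]
      linarith [hinv]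
  have hpos : ∀ k, 1 ≤ k → 0 < E k ∧ E k ≤ θ := by
    intro k hk
    induction k, hk using Nat.le_induction with
    | base => rw [hE1]; exact ⟨hθ0, le_refl _⟩
    | succ k hk ih =>
      obtain ⟨h1, h2⟩ := ih
      obtain ⟨ha, hb⟩ := hstep k hk h1
      rw [hEstep k hk]
      constructor
      · linarith
      · have : 0 < 1/(a k : ℝ) := by positivity
        linarith
  obtain ⟨hEm, hEmθ⟩ := hpos m hm
  have hEm1 : E m ≤ 1 := le_trans hEmθ hθ1
  -- a m ≥ 2
  have ham2 : (2:ℤ) ≤ a m := by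
    have h1 : (1:ℝ) ≤ 1 / E m := by
      rw [le_div_iff₀ hEm]; linarith
    have : (1:ℤ) ≤ ⌊1/E m⌋ := by
      rw [Int.le_floor]; exact_mod_cast h1
    rw [hak m hm]; omega
  have hA2 : (2:ℝ) ≤ (a m : ℝ) := by exact_mod_cast ham2
  have hN1 : (1:ℝ) ≤ (N:ℝ) := by exact_mod_cast hN
  set A : ℝ := (a m : ℝ) with hAdef
  have hD : (1:ℝ) ≤ (N:ℝ) * A - 1 := by nlinarith
  have hDpos : (0:ℝ) < (N:ℝ) * A - 1 := by linarith
  have hApos : (0:ℝ) < A := by linarith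
  obtain ⟨_, hinvlt⟩ := hstep m hm hEm
  have hEm1pos : 0 < E (m+1) := by rw [hEstep m hm]; linarith
  -- E(m+1) ≤ 1/(A * (N*A-1))
  have hkey : E (m+1) * (A * ((N:ℝ) * A - 1)) ≤ 1 := by
    have h' : E m ≤ (N:ℝ)/((N:ℝ) * A - 1) := by simp only [hE]; exact h
    have hEm1le : E (m+1) ≤ (N:ℝ)/((N:ℝ) * A - 1) - 1/A := by
      rw [hEstep m hm]; linarith
    have hcalc : ((N:ℝ)/((N:ℝ) * A - 1) - 1/A) * (A * ((N:ℝ) * A - 1)) = 1 := by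
      field_simp
      ring
    calc E (m+1) * (A * ((N:ℝ) * A - 1))
        ≤ ((N:ℝ)/((N:ℝ) * A - 1) - 1/A) * (A * ((N:ℝ) * A - 1)) := by
          apply mul_le_mul_of_nonneg_right hEm1le
          positivity
      _ = 1 := hcalc
  have hfloor : A * ((N:ℝ) * A - 1) ≤ 1 / E (m+1) := by
    rw [le_div_iff₀ hEm1pos]; linarith
  have ham1 : a (m+1) = ⌊1/E (m+1)⌋ + 1 := hak (m+1) (by omega)
  have hle : ((N:ℤ) * (a m)^2 - a m : ℤ) ≤ ⌊1/E (m+1)⌋ := by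
    rw [Int.le_floor]
    push_cast
    calc ((N:ℝ) * A^2 - A) = A * ((N:ℝ) * A - 1) := by ring
      _ ≤ 1 / E (m+1) := hfloor
  rw [ham1]
  omega
end

section
/- Let θ = p/q ∈ (0,1] with p, q positive integers, gcd(p,q) = 1, and let ℓ be the smallest nonnegative integer such that p divides q + ℓ. Let (a_n) be the greedy Egyptian fraction expansion of θ. Then (θ − Σ_{n=1}^ℓ 1/a_n)^{−1} is a positive integer. -/
namespace Stmt11Aux

/-- The greedy remainder fraction: `PQ p q m = (Pₘ, Qₘ)` with remainder `Pₘ/Qₘ`. -/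
def PQ (p q : ℕ) : ℕ → ℕ × ℕ
  | 0 => (p, q)
  | m + 1 =>
      ((PQ p q m).1 * ((PQ p q m).2 / (PQ p q m).1 + 1) - (PQ p q m).2,
       (PQ p q m).2 * ((PQ p q m).2 / (PQ p q m).1 + 1))

lemma PQ_succ_fst (p q m : ℕ) :
    (PQ p q (m + 1)).1
      = (PQ p q m).1 * ((PQ p q m).2 / (PQ p q m).1 + 1) - (PQ p q m).2 := rfl

lemma PQ_succ_snd (p q m : ℕ) :
    (PQ p q (m + 1)).2
      = (PQ p q m).2 * ((PQ p q m).2 / (PQ p q m).1 + 1) := rfl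

lemma Pstep (P Q : ℕ) (hP : 0 < P) : P * (Q / P + 1) - Q = P - Q % P := by
  have h := Nat.div_add_mod Q P
  have h2 : P * (Q / P + 1) = P * (Q / P) + P := by ring
  omega

lemma Qge (P Q : ℕ) (hP : 0 < P) : Q < P * (Q / P + 1) := by
  have h := Nat.div_add_mod Q P
  have h2 : P * (Q / P + 1) = P * (Q / P) + P := by ring
  have h3 : Q % P < P := Nat.mod_lt Q hP
  omega

lemma pos (p q : ℕ) (hp : 0 < p) (hpq : p ≤ q) :
    ∀ m, 0 < (PQ p q m).1 ∧ (PQ p q m).1 ≤ (PQ p q m).2 := by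
  intro m
  induction m with
  | zero => exact ⟨hp, hpq⟩
  | succ m ih =>
    obtain ⟨hP, hPQ⟩ := ih
    rw [PQ_succ_fst, PQ_succ_snd, Pstep _ _ hP]
    have hm : (PQ p q m).2 % (PQ p q m).1 < (PQ p q m).1 := Nat.mod_lt _ hP
    have hle : (PQ p q m).2 ≤ (PQ p q m).2 * ((PQ p q m).2 / (PQ p q m).1 + 1) :=
      Nat.le_mul_of_pos_right _ (Nat.succ_pos _)
    exact ⟨by omega, le_trans (by omega) hle⟩

lemma floor_nat_div (P Q : ℕ) (hP : 0 < P) : ⌊(Q : ℝ) / (P : ℝ)⌋ = (Q / P : ℕ) := by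
  have hP' : (0 : ℝ) < P := by exact_mod_cast hP
  refine Int.floor_eq_iff.mpr ⟨?_, ?_⟩
  · exact_mod_cast Nat.cast_div_le
  · rw [div_lt_iff₀ hP']
    have h := Qge P Q hP
    rw [Nat.mul_comm] at h
    exact_mod_cast h

lemma dvd0 (P Q : ℕ) (hP : 0 < P) (h : P ∣ Q) :
    (P * (Q / P + 1) - Q) ∣ Q * (Q / P + 1) := by
  obtain ⟨c, rfl⟩ := h
  have h1 : P * c / P = c := Nat.mul_div_cancel_left c hP
  rw [h1]
  have h2 : P * (c + 1) - P * c = P := by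
    have : P * (c + 1) = P * c + P := by ring
    omega
  rw [h2]
  exact dvd_mul_of_dvd_left (dvd_mul_right P c) _

lemma dvd1 (P Q j : ℕ) (hP : 0 < P) (hnd : ¬ P ∣ Q) (h : P ∣ Q + j) :
    ∃ j' < j, (P * (Q / P + 1) - Q) ∣ Q * (Q / P + 1) + j' := by
  have hr : 0 < Q % P := by
    rcases Nat.eq_zero_or_pos (Q % P) with h0 | h0
    · exact absurd (Nat.dvd_iff_mod_eq_zero.mpr h0) hnd
    · exact h0
  have hrlt : Q % P < P := Nat.mod_lt Q hP
  -- show `P - Q % P ≤ j`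
  have h1 : (Q + j) % P = 0 := Nat.dvd_iff_mod_eq_zero.mp h
  have h2 : (Q % P + j % P) % P = 0 := by rw [← Nat.add_mod]; exact h1
  obtain ⟨t, ht⟩ : P ∣ Q % P + j % P := Nat.dvd_iff_mod_eq_zero.mpr h2
  have hjlt : j % P < P := Nat.mod_lt j hP
  have ht2 : t < 2 := by
    have hlt : P * t < P * 2 := by
      calc P * t = Q % P + j % P := ht.symm
        _ < P * 2 := by omega
    exact Nat.lt_of_mul_lt_mul_left hlt
  interval_cases t
  · omega
  · have hjmod : j % P = P - Q % P := by omega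
    have hjge : P - Q % P ≤ j := hjmod ▸ Nat.mod_le j P
    rw [Pstep P Q hP]
    set P' := P - Q % P with hP'def
    set Q' := Q * (Q / P + 1) with hQ'def
    have hP' : 0 < P' := by omega
    refine ⟨(P' - Q' % P') % P', lt_of_lt_of_le (Nat.mod_lt _ hP') hjge, ?_⟩
    rcases Nat.eq_zero_or_pos (Q' % P') with h0 | h0
    · have hz : (P' - Q' % P') % P' = 0 := by rw [h0, Nat.sub_zero, Nat.mod_self]
      rw [hz, Nat.add_zero]
      exact Nat.dvd_iff_mod_eq_zero.mpr h0
    · have hlt' : Q' % P' < P' := Nat.mod_lt _ hP'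
      have hj' : (P' - Q' % P') % P' = P' - Q' % P' := Nat.mod_eq_of_lt (by omega)
      rw [hj']
      refine ⟨Q' / P' + 1, ?_⟩
      have hd := Nat.div_add_mod Q' P'
      have hmul : P' * (Q' / P' + 1) = P' * (Q' / P') + P' := by ring
      omega

lemma chain (p q ℓ : ℕ) (hp : 0 < p) (hpq : p ≤ q) (hℓ : p ∣ q + ℓ) :
    ∀ m, m ≤ ℓ → ∃ j, j + m ≤ ℓ ∧ (PQ p q m).1 ∣ (PQ p q m).2 + j := by
  intro m
  induction m with
  | zero => intro _; exact ⟨ℓ, by omega, hℓ⟩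
  | succ m ih =>
    intro hm
    obtain ⟨j, hj, hd⟩ := ih (by omega)
    have hP : 0 < (PQ p q m).1 := (pos p q hp hpq m).1
    rw [PQ_succ_fst, PQ_succ_snd]
    by_cases h0 : (PQ p q m).1 ∣ (PQ p q m).2
    · exact ⟨0, by omega, by simpa using dvd0 _ _ hP h0⟩
    · have hj0 : j ≠ 0 := by
        rintro rfl
        rw [Nat.add_zero] at hd
        exact h0 hd
      obtain ⟨j', hj', hd'⟩ := dvd1 _ _ j hP h0 hd
      exact ⟨j', by omega, hd'⟩

end Stmt11Aux

open Stmt11Aux in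
theorem stmt_11 (p q : ℕ) (hp : 0 < p) (hq : 0 < q) (hpq : p ≤ q)
    (hgcd : Nat.gcd p q = 1)
    (ℓ : ℕ) (hℓ : p ∣ q + ℓ) (hℓmin : ∀ j : ℕ, j < ℓ → ¬ p ∣ q + j)
    (a : ℕ → ℤ)
    (ha1 : a 1 = ⌊1/((p:ℝ)/q)⌋ + 1)
    (harec : ∀ k, 2 ≤ k →
      a k = ⌊1/((p:ℝ)/q - ∑ n ∈ Finset.Ico 1 k, (1:ℝ)/(a n))⌋ + 1) :
    ∃ M : ℕ, 0 < M ∧ ((p:ℝ)/q - ∑ n ∈ Finset.Icc 1 ℓ, (1:ℝ)/(a n))⁻¹ = M := by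
  -- the real-number invariant
  have key : ∀ m, (p:ℝ)/q - ∑ n ∈ Finset.Icc 1 m, (1:ℝ)/(a n)
      = ((PQ p q m).1 : ℝ) / ((PQ p q m).2 : ℝ) := by
    intro m
    induction m with
    | zero => simp [PQ]
    | succ m ih =>
      have hP : 0 < (PQ p q m).1 := (pos p q hp hpq m).1
      have hQ : 0 < (PQ p q m).2 := lt_of_lt_of_le hP (pos p q hp hpq m).2
      set P := (PQ p q m).1 with hPdef
      set Q := (PQ p q m).2 with hQdef
      obtain ⟨k, hk⟩ : ∃ k : ℕ, Q / P + 1 = k := ⟨_, rfl⟩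
      have hkpos : 0 < k := hk ▸ Nat.succ_pos _
      have ha : a (m + 1) = (k : ℤ) := by
        have hfloor : ⌊1 / ((P : ℝ) / (Q : ℝ))⌋ = ((Q / P : ℕ) : ℤ) := by
          rw [one_div_div]
          exact floor_nat_div P Q hP
        rcases Nat.eq_zero_or_pos m with rfl | hm
        · have e1 : (P : ℝ) = (p : ℝ) := by rw [hPdef]; rfl
          have e2 : (Q : ℝ) = (q : ℝ) := by rw [hQdef]; rfl
          rw [ha1, ← e1, ← e2, hfloor, ← hk]
          push_cast
          ring
        · have hIco : Finset.Ico 1 (m + 1) = Finset.Icc 1 m := by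
            rw [Finset.Ico_add_one_right_eq_Icc]
          rw [harec (m + 1) (by omega), hIco, ih, hfloor, ← hk]
          push_cast
          ring
      have hge : Q ≤ P * k := by rw [← hk]; exact le_of_lt (Qge P Q hP)
      have hsum : ∑ n ∈ Finset.Icc 1 (m + 1), (1:ℝ)/(a n)
          = (∑ n ∈ Finset.Icc 1 m, (1:ℝ)/(a n)) + 1 / (a (m + 1)) := by
        rw [← Finset.Ico_add_one_right_eq_Icc, Finset.sum_Ico_succ_top (by omega), Finset.Ico_add_one_right_eq_Icc]
      have hstep : (p:ℝ)/q - ∑ n ∈ Finset.Icc 1 (m + 1), (1:ℝ)/(a n)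
          = (P:ℝ)/Q - 1/(k:ℝ) := by
        rw [hsum, ha]
        push_cast
        rw [← ih]
        ring
      rw [hstep, PQ_succ_fst, PQ_succ_snd, ← hPdef, ← hQdef, hk, Nat.cast_sub hge]
      have hPne : (P:ℝ) ≠ 0 := by exact_mod_cast hP.ne'
      have hQne : (Q:ℝ) ≠ 0 := by exact_mod_cast hQ.ne'
      have hkne : (k:ℝ) ≠ 0 := by exact_mod_cast hkpos.ne'
      push_cast
      field_simp
  -- the divisibility at step ℓ
  obtain ⟨j, hj, hd⟩ := chain p q ℓ hp hpq hℓ ℓ le_rfl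
  have hj0 : j = 0 := by omega
  subst hj0
  rw [Nat.add_zero] at hd
  obtain ⟨c, hc⟩ := hd
  have hP : 0 < (PQ p q ℓ).1 := (pos p q hp hpq ℓ).1
  have hQ : 0 < (PQ p q ℓ).2 := lt_of_lt_of_le hP (pos p q hp hpq ℓ).2
  have hc0 : 0 < c := by
    rcases Nat.eq_zero_or_pos c with rfl | h
    · simp [hc] at hQ
    · exact h
  refine ⟨c, hc0, ?_⟩
  rw [key ℓ, hc]
  have hPne : ((PQ p q ℓ).1 : ℝ) ≠ 0 := by positivity
  have hcne : (c : ℝ) ≠ 0 := by positivity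
  push_cast
  rw [inv_div]
  rw [mul_comm, mul_div_assoc, div_self hPne, mul_one]
end

section
/- Let θ ∈ (0,1] with greedy sequence (a_n). If for some index m the error e_{m−1} = θ − Σ_{n<m} 1/a_n satisfies (e_{m−1})^{−1} ∈ ℕ, then a_{n+1} = a_n² − a_n + 1 for all n ≥ m. -/
/-!
Once the error is a unit fraction `1/M`, the greedy step picks `1/(M+1)` and leaves the error
`1/M - 1/(M+1) = 1/(M(M+1))`, again a unit fraction. So the errors stay unit fractions, and
`a_{n+1} = M(M+1) + 1 = a_n² - a_n + 1` with `a_n = M + 1`.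
-/

open Finset

/-- The paper's `e_{k-1}`: the error after the terms `1/a 1, …, 1/a (k-1)`. -/
noncomputable def egyptianError (θ : ℝ) (a : ℕ → ℤ) (k : ℕ) : ℝ :=
  θ - ∑ n ∈ Ico 1 k, (1 : ℝ) / a n

lemma egyptianError_succ (θ : ℝ) (a : ℕ → ℤ) {k : ℕ} (hk : 1 ≤ k) :
    egyptianError θ a (k + 1) = egyptianError θ a k - 1 / a k := by
  rw [egyptianError, egyptianError, sum_Ico_succ_top hk]
  ring

lemma inv_sub_one_div_succ_of_inv_eq_natCast {e : ℝ} {M : ℕ} (hM : 0 < M) (he : e⁻¹ = M) :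
    (e - 1 / ((M + 1 : ℤ) : ℝ))⁻¹ = ((M * (M + 1) : ℕ) : ℝ) := by
  have hMR : (0 : ℝ) < M := by exact_mod_cast hM
  rw [inv_eq_iff_eq_inv.mp he]
  push_cast
  field_simp
  ring

theorem sylvester_of_greedy_of_inv_eq_natCast {e : ℕ → ℝ} {a : ℕ → ℤ} {m : ℕ}
    (ha : ∀ n, m ≤ n → a n = ⌊(e n)⁻¹⌋ + 1)
    (he : ∀ n, m ≤ n → e (n + 1) = e n - 1 / a n)
    (hm : ∃ M : ℕ, 0 < M ∧ (e m)⁻¹ = M) :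
    ∀ n, m ≤ n → a (n + 1) = a n ^ 2 - a n + 1 := by
  have a_eq {n : ℕ} {M : ℕ} (hn : m ≤ n) (hM : (e n)⁻¹ = M) : a n = M + 1 := by
    rw [ha n hn, hM, Int.floor_natCast]
  have e_succ {n : ℕ} {M : ℕ} (hn : m ≤ n) (hM0 : 0 < M) (hM : (e n)⁻¹ = M) :
      (e (n + 1))⁻¹ = ((M * (M + 1) : ℕ) : ℝ) := by
    rw [he n hn, a_eq hn hM]
    exact inv_sub_one_div_succ_of_inv_eq_natCast hM0 hM
  have unit_fraction : ∀ n, m ≤ n → ∃ M : ℕ, 0 < M ∧ (e n)⁻¹ = M := by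
    intro n hn
    induction n, hn using Nat.le_induction with
    | base => exact hm
    | succ n hn ih =>
      obtain ⟨M, hM0, hM⟩ := ih
      exact ⟨M * (M + 1), by positivity, e_succ hn hM0 hM⟩
  intro n hn
  obtain ⟨M, hM0, hM⟩ := unit_fraction n hn
  rw [a_eq (hn.trans n.le_succ) (e_succ hn hM0 hM), a_eq hn hM]
  push_cast
  ring

theorem stmt_12_general (θ : ℝ) (a : ℕ → ℤ)
    (ha1 : a 1 = ⌊1/θ⌋ + 1)
    (harec : ∀ k, 2 ≤ k →
      a k = ⌊1/(θ - ∑ n ∈ Finset.Ico 1 k, (1:ℝ)/(a n))⌋ + 1)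
    (m : ℕ) (hm : 1 ≤ m)
    (h : ∃ M : ℕ, 0 < M ∧ (θ - ∑ n ∈ Finset.Ico 1 m, (1:ℝ)/(a n))⁻¹ = M) :
    ∀ n, m ≤ n → a (n+1) = (a n)^2 - a n + 1 := by
  have greedy : ∀ k, 1 ≤ k → a k = ⌊(egyptianError θ a k)⁻¹⌋ + 1 := by
    intro k hk
    rcases hk.eq_or_lt with rfl | hk
    · simpa [egyptianError] using ha1
    · simpa [egyptianError] using harec k hk
  exact sylvester_of_greedy_of_inv_eq_natCast (fun n hn => greedy n (hm.trans hn))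
    (fun n hn => egyptianError_succ θ a (hm.trans hn)) h

theorem stmt_12 (θ : ℝ) (hθ : θ ∈ Set.Ioc (0:ℝ) 1) (a : ℕ → ℤ)
    (ha1 : a 1 = ⌊1/θ⌋ + 1)
    (harec : ∀ k, 2 ≤ k →
      a k = ⌊1/(θ - ∑ n ∈ Finset.Ico 1 k, (1:ℝ)/(a n))⌋ + 1)
    (m : ℕ) (hm : 1 ≤ m)
    (h : ∃ M : ℕ, 0 < M ∧ (θ - ∑ n ∈ Finset.Ico 1 m, (1:ℝ)/(a n))⁻¹ = M) :
    ∀ n, m ≤ n → a (n+1) = (a n)^2 - a n + 1 :=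
  stmt_12_general θ a ha1 harec m hm h
end

section
/- For every integer ℓ ≥ 1 and every positive integer k, the fraction p/q = (ℓ+1)/((ℓ+1)!·k + 1) satisfies: gcd(p,q) = 1, ℓ is the smallest nonnegative integer such that p divides q + ℓ, and ℓ is the smallest nonnegative integer m such that (p/q − Σ_{n=1}^m 1/a_n)^{−1} is a positive integer, where (a_n) is the greedy Egyptian fraction expansion of p/q. -/
/-!
Write `F n K = n / (n! K + 1)` (`factorialFrac`), so that `p / q = F (ℓ + 1) k`. For `L ≥ 1` the
reciprocal `((L + 1)! K + 1) / (L + 1)` of `F (L + 1) K` has floor `L! K`, so the next greedy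
denominator is `L! K + 1`, and `F (L + 1) K - 1 / (L! K + 1) = F L K'` with
`K' = K ((L + 1)! K + L + 2)`. Hence after `m ≤ ℓ` greedy steps the remainder is `F (ℓ + 1 - m) K`
for some `K`. Its reciprocal `(n! K + 1) / n` is an integer exactly when `n = 1`, since `n ∣ n! K`;
this happens first at `m = ℓ`.
-/

open Nat

section Divisibility

variable {n : ℕ} (K : ℕ)

theorem dvd_factorial_mul_add_iff (hn : 0 < n) (j : ℕ) : n ∣ n ! * K + j ↔ n ∣ j :=
  Nat.dvd_add_right ((Nat.dvd_factorial hn le_rfl).mul_right K)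

theorem not_dvd_factorial_mul_add_one (hn : 2 ≤ n) : ¬ n ∣ n ! * K + 1 := by
  rw [dvd_factorial_mul_add_iff K (by omega), Nat.dvd_one]
  omega

theorem coprime_factorial_mul_add_one (hn : 0 < n) : Nat.Coprime n (n ! * K + 1) := by
  obtain ⟨t, ht⟩ := (Nat.dvd_factorial hn le_rfl).mul_right K
  rw [ht, Nat.coprime_mul_left_add_right]
  exact Nat.coprime_one_right n

end Divisibility

noncomputable def factorialFrac (n K : ℕ) : ℝ := (n : ℝ) / ((n ! * K + 1 : ℕ) : ℝ)

namespace factorialFrac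

theorem inv_eq (n K : ℕ) : (factorialFrac n K)⁻¹ = ((n ! * K + 1 : ℕ) : ℝ) / n := by
  rw [factorialFrac, inv_div]

theorem floor_inv {L : ℕ} (hL : 1 ≤ L) (K : ℕ) : ⌊(factorialFrac (L + 1) K)⁻¹⌋ = (L ! * K : ℕ) := by
  have hdiv : ((L + 1)! * K + 1) / (L + 1) = L ! * K := by
    rw [Nat.factorial_succ, mul_assoc, Nat.mul_add_div (by omega), Nat.div_eq_of_lt (by omega),
      add_zero]
  rw [inv_eq, Int.floor_div_natCast, Int.floor_natCast, ← hdiv]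
  norm_cast

theorem sub_one_div (L K : ℕ) :
    factorialFrac (L + 1) K - 1 / ((L ! * K + 1 : ℕ) : ℝ)
      = factorialFrac L (K * ((L + 1)! * K + L + 2)) := by
  simp only [factorialFrac, Nat.factorial_succ]
  push_cast
  field_simp
  ring

theorem inv_one (K : ℕ) : (factorialFrac 1 K)⁻¹ = ((K + 1 : ℕ) : ℝ) := by
  simp [inv_eq]

theorem inv_ne_natCast {n : ℕ} (hn : 2 ≤ n) (K M : ℕ) : (factorialFrac n K)⁻¹ ≠ M := by
  intro h
  rw [inv_eq, div_eq_iff (by positivity)] at h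
  exact not_dvd_factorial_mul_add_one K hn ⟨M, by exact_mod_cast h.trans (mul_comm _ _)⟩

end factorialFrac

def IsGreedyEgyptian (x : ℝ) (a : ℕ → ℤ) : Prop :=
  ∀ m, a (m + 1) = ⌊(x - ∑ n ∈ Finset.Icc 1 m, (1 : ℝ) / a n)⁻¹⌋ + 1

theorem IsGreedyEgyptian.exists_sub_sum_eq_factorialFrac {ℓ k : ℕ} {a : ℕ → ℤ}
    (ha : IsGreedyEgyptian (factorialFrac (ℓ + 1) k) a) {m : ℕ} (hm : m ≤ ℓ) :
    ∃ K, factorialFrac (ℓ + 1) k - ∑ n ∈ Finset.Icc 1 m, (1 : ℝ) / a n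
      = factorialFrac (ℓ + 1 - m) K := by
  induction m with
  | zero => exact ⟨k, by simp⟩
  | succ m ih =>
    obtain ⟨K, hr⟩ := ih (by omega)
    rw [show ℓ + 1 - m = ℓ - m + 1 by omega] at hr
    have ha_succ : a (m + 1) = ((ℓ - m)! * K + 1 : ℕ) := by
      rw [ha m, hr, factorialFrac.floor_inv (by omega)]
      norm_cast
    refine ⟨K * ((ℓ - m + 1)! * K + (ℓ - m) + 2), ?_⟩
    rw [Finset.sum_Icc_succ_top (by omega), ← sub_sub, hr, ha_succ, Int.cast_natCast,
      show ℓ + 1 - (m + 1) = ℓ - m by omega]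
    exact factorialFrac.sub_one_div (ℓ - m) K

theorem stmt_13_general (ℓ k : ℕ)
    (p q : ℕ) (hp : p = ℓ + 1) (hq : q = (ℓ + 1).factorial * k + 1)
    (a : ℕ → ℤ)
    (ha1 : a 1 = ⌊1/((p:ℝ)/q)⌋ + 1)
    (harec : ∀ j, 2 ≤ j →
      a j = ⌊1/((p:ℝ)/q - ∑ n ∈ Finset.Ico 1 j, (1:ℝ)/(a n))⌋ + 1) :
    Nat.gcd p q = 1 ∧
    (p ∣ q + ℓ ∧ ∀ j : ℕ, j < ℓ → ¬ p ∣ q + j) ∧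
    IsLeast {m : ℕ | ∃ M : ℕ, 0 < M ∧
      ((p:ℝ)/q - ∑ n ∈ Finset.Icc 1 m, (1:ℝ)/(a n))⁻¹ = M} ℓ := by
  subst hp hq
  rw [show ((ℓ + 1 : ℕ) : ℝ) / (((ℓ + 1)! * k + 1 : ℕ) : ℝ) = factorialFrac (ℓ + 1) k from rfl]
    at ha1 harec ⊢
  have hgreedy : IsGreedyEgyptian (factorialFrac (ℓ + 1) k) a := by
    intro m
    rcases Nat.eq_zero_or_pos m with rfl | hm
    · simpa [one_div] using ha1
    · rw [harec (m + 1) (by omega), Finset.Ico_add_one_right_eq_Icc, one_div]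
  refine ⟨coprime_factorial_mul_add_one k (by omega), ⟨?_, fun j hj hdvd => ?_⟩, ⟨?_, fun m hm => ?_⟩⟩
  · rw [add_assoc, dvd_factorial_mul_add_iff k (by omega), add_comm]
  · rw [add_assoc, dvd_factorial_mul_add_iff k (by omega)] at hdvd
    have := Nat.le_of_dvd (by omega) hdvd
    omega
  · obtain ⟨K, hr⟩ := hgreedy.exists_sub_sum_eq_factorialFrac le_rfl
    refine ⟨K + 1, by omega, ?_⟩
    rw [hr, show ℓ + 1 - ℓ = 1 by omega, factorialFrac.inv_one]
  · obtain ⟨M, -, hM⟩ := hm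
    by_contra! hlt
    obtain ⟨K, hr⟩ := hgreedy.exists_sub_sum_eq_factorialFrac hlt.le
    rw [hr] at hM
    exact factorialFrac.inv_ne_natCast (by omega) K M hM

theorem stmt_13 (ℓ k : ℕ) (hℓ : 1 ≤ ℓ) (hk : 1 ≤ k)
    (p q : ℕ) (hp : p = ℓ + 1) (hq : q = (ℓ + 1).factorial * k + 1)
    (a : ℕ → ℤ)
    (ha1 : a 1 = ⌊1/((p:ℝ)/q)⌋ + 1)
    (harec : ∀ j, 2 ≤ j →
      a j = ⌊1/((p:ℝ)/q - ∑ n ∈ Finset.Ico 1 j, (1:ℝ)/(a n))⌋ + 1) :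
    Nat.gcd p q = 1 ∧
    (p ∣ q + ℓ ∧ ∀ j : ℕ, j < ℓ → ¬ p ∣ q + j) ∧
    IsLeast {m : ℕ | ∃ M : ℕ, 0 < M ∧
      ((p:ℝ)/q - ∑ n ∈ Finset.Icc 1 m, (1:ℝ)/(a n))⁻¹ = M} ℓ :=
  stmt_13_general ℓ k p q hp hq a ha1 harec
end

section
/- Let p, q be positive integers with p < q, let d = Υ(p,q) be the least positive integer with p | q + d, and suppose d divides q. Let (a_n) be the greedy Egyptian fraction expansion of p/q. Then a_1 = (q+d)/p, and for every n ≥ 2, p/q − Σ_{i=1}^{n−1} 1/a_i = 1/((q/d)·Π_{i=1}^{n−1} a_i); consequently a_n = (q/d)·Π_{i=1}^{n−1} a_i + 1 for n ≥ 2. -/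
/-!
Write `d = Υ(p,q)`. Minimality forces `d ≤ p`, so `d = p - q % p` and `a₁ = ⌊q/p⌋ + 1 = (q + d)/p`.
Then `p/q - 1/a₁ = (p a₁ - q)/(q a₁) = d/(q a₁) = 1/((q/d) a₁)` is a unit fraction with integer
denominator, and once a greedy remainder is `1/K` the next term is `K + 1` and the next remainder
is `1/K - 1/(K+1) = 1/(K (K+1))`: the denominators multiply up as in Sylvester's sequence.
-/

open Finset

theorem Nat.mod_add_eq_of_minimal_dvd_add {p q d : ℕ} (hd : 0 < d) (hdvd : p ∣ q + d)
    (hmin : ∀ m : ℕ, 0 < m → m < d → ¬ p ∣ q + m) : q % p + d = p := by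
  have hp : 0 < p := Nat.pos_of_ne_zero (by rintro rfl; simp at hdvd; omega)
  have hdp : d ≤ p := by
    by_contra! hpd
    refine hmin (d - p) (by omega) (by omega) ?_
    have : q + (d - p) + p = q + d := by omega
    rwa [← this, Nat.dvd_add_left (dvd_refl p)] at hdvd
  have hdvd' : p ∣ q % p + d := by
    rwa [← Nat.div_add_mod q p, add_assoc, Nat.dvd_add_right (dvd_mul_right p _)] at hdvd
  have hlt := Nat.mod_lt q hp
  exact Nat.eq_of_dvd_of_lt_two_mul (by omega) hdvd' (by omega)

theorem floor_one_div_div_natCast (p q : ℕ) : ⌊1 / ((p : ℝ) / q)⌋ = (q : ℤ) / p := by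
  rw [one_div_div, Int.floor_div_natCast, Int.floor_natCast]

theorem one_div_sub_one_div_add_one {K : ℝ} (hK : 0 < K) :
    1 / K - 1 / (K + 1) = 1 / (K * (K + 1)) := by
  field_simp
  ring

theorem div_sub_one_div_eq_one_div_mul {p q d N a : ℝ} (hd : d ≠ 0) (hN : N ≠ 0) (ha : a ≠ 0)
    (hq : q = N * d) (hpa : p * a = q + d) : p / q - 1 / a = 1 / (N * a) := by
  subst hq
  field_simp
  linear_combination hpa

section Greedy

variable {x : ℝ} {a : ℕ → ℤ}

theorem greedy_step {n : ℕ} (hn : 1 ≤ n) {K : ℤ} (hK : 0 < K)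
    (hrem : x - ∑ i ∈ Ico 1 n, (1 : ℝ) / a i = 1 / K)
    (han : a n = ⌊1 / (x - ∑ i ∈ Ico 1 n, (1 : ℝ) / a i)⌋ + 1) :
    a n = K + 1 ∧ x - ∑ i ∈ Ico 1 (n + 1), (1 : ℝ) / a i = 1 / ((K * (K + 1) : ℤ) : ℝ) := by
  rw [hrem, one_div_one_div, Int.floor_intCast] at han
  refine ⟨han, ?_⟩
  rw [sum_Ico_succ_top hn, ← sub_sub, hrem, han]
  push_cast
  exact one_div_sub_one_div_add_one (by exact_mod_cast hK)

theorem greedy_remainder_eq_one_div_mul_prod {c : ℤ} {m : ℕ} (hm : 1 ≤ m)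
    (hpos : 0 < c * ∏ i ∈ Ico 1 m, a i)
    (hbase : x - ∑ i ∈ Ico 1 m, (1 : ℝ) / a i = 1 / ((c * ∏ i ∈ Ico 1 m, a i : ℤ) : ℝ))
    (hrec : ∀ j, m ≤ j → a j = ⌊1 / (x - ∑ i ∈ Ico 1 j, (1 : ℝ) / a i)⌋ + 1)
    {n : ℕ} (hn : m ≤ n) :
    0 < c * ∏ i ∈ Ico 1 n, a i ∧
      x - ∑ i ∈ Ico 1 n, (1 : ℝ) / a i = 1 / ((c * ∏ i ∈ Ico 1 n, a i : ℤ) : ℝ) := by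
  induction n, hn using Nat.le_induction with
  | base => exact ⟨hpos, hbase⟩
  | succ n hmn ih =>
    obtain ⟨hK, hrem⟩ := ih
    obtain ⟨han, hrem'⟩ := greedy_step (hm.trans hmn) hK hrem (hrec n hmn)
    have hprod : c * ∏ i ∈ Ico 1 (n + 1), a i
        = (c * ∏ i ∈ Ico 1 n, a i) * (c * ∏ i ∈ Ico 1 n, a i + 1) := by
      rw [prod_Ico_succ_top (hm.trans hmn), han, mul_assoc]
    rw [hprod]
    exact ⟨by positivity, hrem'⟩

end Greedy

theorem stmt_14_general (p q d : ℕ) (hpq : p < q)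
    (hd : 0 < d) (hddvd : p ∣ q + d) (hdmin : ∀ m : ℕ, 0 < m → m < d → ¬ p ∣ q + m)
    (hdq : d ∣ q)
    (a : ℕ → ℤ)
    (ha1 : a 1 = ⌊1/((p:ℝ)/q)⌋ + 1)
    (harec : ∀ j, 2 ≤ j →
      a j = ⌊1/((p:ℝ)/q - ∑ n ∈ Finset.Ico 1 j, (1:ℝ)/(a n))⌋ + 1) :
    (p : ℤ) * a 1 = q + d ∧
    ∀ n, 2 ≤ n →
      ((p:ℝ)/q - ∑ i ∈ Finset.Ico 1 n, (1:ℝ)/(a i)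
        = 1 / (((q:ℝ)/d) * ∏ i ∈ Finset.Ico 1 n, (a i : ℝ))) ∧
      (a n : ℝ) = ((q:ℝ)/d) * ∏ i ∈ Finset.Ico 1 n, (a i : ℝ) + 1 := by
  have hpa₁ : (p : ℤ) * a 1 = q + d := by
    have hmod : ((q % p : ℕ) : ℤ) + d = p := by
      exact_mod_cast Nat.mod_add_eq_of_minimal_dvd_add hd hddvd hdmin
    push_cast at hmod
    rw [ha1, floor_one_div_div_natCast]
    linarith [Int.mul_ediv_add_emod (q : ℤ) p]
  refine ⟨hpa₁, fun n hn => ?_⟩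
  set N := q / d
  have hN : 0 < N := Nat.div_pos (Nat.le_of_dvd (by omega) hdq) hd
  have hqN : (q : ℝ) / d = N := (Nat.cast_div hdq (by positivity)).symm
  have ha₁ : 0 < a 1 := pos_of_mul_pos_right (by rw [hpa₁]; positivity) (by positivity)
  have hIco : Ico 1 2 = {1} := rfl
  have hbase : (p : ℝ) / q - ∑ i ∈ Ico 1 2, (1 : ℝ) / a i
      = 1 / (((N : ℤ) * ∏ i ∈ Ico 1 2, a i : ℤ) : ℝ) := by
    rw [hIco, sum_singleton, prod_singleton]
    push_cast
    refine div_sub_one_div_eq_one_div_mul (d := d) (N := N) (by positivity) (by positivity)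
      (by positivity) ?_ (by exact_mod_cast hpa₁)
    rw [← hqN, div_mul_cancel₀ _ (by positivity)]
  obtain ⟨hK, hrem⟩ := greedy_remainder_eq_one_div_mul_prod one_le_two
    (by rw [hIco, prod_singleton]; positivity) hbase harec hn
  have han := (greedy_step (by omega) hK hrem (harec n hn)).1
  have hcast : (((N : ℤ) * ∏ i ∈ Ico 1 n, a i : ℤ) : ℝ)
      = (q : ℝ) / d * ∏ i ∈ Ico 1 n, (a i : ℝ) := by
    push_cast
    rw [hqN]
  rw [← hcast]
  exact ⟨hrem, by exact_mod_cast han⟩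

theorem stmt_14 (p q d : ℕ) (hp : 0 < p) (hpq : p < q)
    (hd : 0 < d) (hddvd : p ∣ q + d) (hdmin : ∀ m : ℕ, 0 < m → m < d → ¬ p ∣ q + m)
    (hdq : d ∣ q)
    (a : ℕ → ℤ)
    (ha1 : a 1 = ⌊1/((p:ℝ)/q)⌋ + 1)
    (harec : ∀ j, 2 ≤ j →
      a j = ⌊1/((p:ℝ)/q - ∑ n ∈ Finset.Ico 1 j, (1:ℝ)/(a n))⌋ + 1) :
    (p : ℤ) * a 1 = q + d ∧
    ∀ n, 2 ≤ n →
      ((p:ℝ)/q - ∑ i ∈ Finset.Ico 1 n, (1:ℝ)/(a i)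
        = 1 / (((q:ℝ)/d) * ∏ i ∈ Finset.Ico 1 n, (a i : ℝ))) ∧
      (a n : ℝ) = ((q:ℝ)/d) * ∏ i ∈ Finset.Ico 1 n, (a i : ℝ) + 1 :=
  stmt_14_general p q d hpq hd hddvd hdmin hdq a ha1 harec
end

section
/- Let p, q be positive integers with p < q, q odd, and suppose 2 is the least positive integer m with p | q + m. Let (a_n) be the greedy Egyptian fraction expansion of p/q. Then a_1 = (q+2)/p, a_2 = ⌊q·a_1/2⌋ + 1, and for every n ≥ 3, p/q − Σ_{i=1}^{n−1} 1/a_i = 1/(q·Π_{i=1}^{n−1} a_i); consequently a_n = q·Π_{i=1}^{n−1} a_i + 1 for n ≥ 3. -/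
/-!
Write `q + 2 = p k`. Since `p ≥ 2`, the first greedy denominator is `k` and leaves the remainder
`p/q - 1/k = 2/(qk)`, where `qk` is odd because `pk = q + 2` is. The greedy denominator for
`2/(2m+1)` is `m + 1`, leaving `2/(2m+1) - 1/(m+1) = 1/((2m+1)(m+1))`, a unit fraction. From then
on the expansion follows Sylvester's recurrence: the greedy denominator for `1/N` is `N + 1`,
leaving `1/(N(N+1))`.
-/

open Finset

noncomputable def greedyRemainder (x : ℝ) (a : ℕ → ℤ) (n : ℕ) : ℝ :=
  x - ∑ i ∈ Ico 1 n, (1 : ℝ) / a i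

theorem greedyRemainder_succ (x : ℝ) (a : ℕ → ℤ) {n : ℕ} (hn : 1 ≤ n) :
    greedyRemainder x a (n + 1) = greedyRemainder x a n - 1 / a n := by
  rw [greedyRemainder, greedyRemainder, sum_Ico_succ_top hn]
  ring

theorem floor_div_add_one_eq_of_add_eq_mul {p q k r : ℕ} (hr : 0 < r) (hrp : r ≤ p)
    (h : q + r = p * k) : ⌊(q : ℝ) / p⌋ + 1 = k := by
  have hp : (0 : ℝ) < p := by exact_mod_cast hr.trans_le hrp
  have hR : (q : ℝ) + r = p * k := by exact_mod_cast h
  have hr' : (0 : ℝ) < r := by exact_mod_cast hr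
  have hrp' : (r : ℝ) ≤ p := by exact_mod_cast hrp
  suffices ⌊(q : ℝ) / p⌋ = (k : ℤ) - 1 by rw [this]; ring
  rw [Int.floor_eq_iff, le_div_iff₀ hp, div_lt_iff₀ hp]
  push_cast
  constructor <;> linarith

theorem Int.floor_two_mul_add_one_div_two (m : ℕ) : ⌊(2 * (m : ℝ) + 1) / 2⌋ = m := by
  rw [Int.floor_eq_iff, le_div_iff₀ two_pos, div_lt_iff₀ two_pos]
  push_cast
  constructor <;> linarith

theorem greedyRemainder_two_of_add_eq_mul {p q k r : ℕ} {a : ℕ → ℤ} (hq : q ≠ 0) (hk : k ≠ 0)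
    (h : q + r = p * k) (ha1 : a 1 = k) : greedyRemainder (p / q) a 2 = r / (q * k) := by
  rw [greedyRemainder_succ _ _ le_rfl, greedyRemainder, Ico_self, sum_empty, sub_zero, ha1]
  have hR : (q : ℝ) + r = p * k := by exact_mod_cast h
  push_cast
  field_simp
  linarith

section GreedyStep

variable {x : ℝ} {a : ℕ → ℤ} {n : ℕ}

theorem greedy_step_of_eq_one_div {N : ℤ} (hN : 0 < N) (hn : 1 ≤ n)
    (hrem : greedyRemainder x a n = 1 / N)
    (han : a n = ⌊1 / greedyRemainder x a n⌋ + 1) :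
    a n = N + 1 ∧ greedyRemainder x a (n + 1) = 1 / ((N : ℝ) * (N + 1)) := by
  have ha : a n = N + 1 := by rw [han, hrem, one_div_one_div, Int.floor_intCast]
  refine ⟨ha, ?_⟩
  have hN' : (0 : ℝ) < N := by exact_mod_cast hN
  rw [greedyRemainder_succ x a hn, hrem, ha]
  push_cast
  field_simp
  ring

theorem greedy_step_of_eq_two_div_odd {m : ℕ} (hn : 1 ≤ n)
    (hrem : greedyRemainder x a n = 2 / (2 * m + 1))
    (han : a n = ⌊1 / greedyRemainder x a n⌋ + 1) :
    a n = m + 1 ∧ greedyRemainder x a (n + 1) = 1 / ((2 * (m : ℝ) + 1) * (m + 1)) := by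
  have ha : a n = m + 1 := by
    rw [han, hrem, one_div_div, Int.floor_two_mul_add_one_div_two]
  refine ⟨ha, ?_⟩
  rw [greedyRemainder_succ x a hn, hrem, ha]
  push_cast
  field_simp
  ring

theorem greedy_tail_of_greedyRemainder_eq_one_div {c : ℤ} {n₀ : ℕ} (hn₀ : 1 ≤ n₀)
    (hrec : ∀ j, n₀ ≤ j → a j = ⌊1 / greedyRemainder x a j⌋ + 1)
    (hpos : 0 < c * ∏ i ∈ Ico 1 n₀, a i)
    (hrem : greedyRemainder x a n₀ = 1 / ((c * ∏ i ∈ Ico 1 n₀, a i : ℤ) : ℝ))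
    (n : ℕ) (hn : n₀ ≤ n) :
    greedyRemainder x a n = 1 / ((c * ∏ i ∈ Ico 1 n, a i : ℤ) : ℝ) ∧
      a n = c * ∏ i ∈ Ico 1 n, a i + 1 := by
  have key : greedyRemainder x a n = 1 / ((c * ∏ i ∈ Ico 1 n, a i : ℤ) : ℝ) ∧
      0 < c * ∏ i ∈ Ico 1 n, a i := by
    induction n, hn using Nat.le_induction with
    | base => exact ⟨hrem, hpos⟩
    | succ n hn ih =>
      have h1n : 1 ≤ n := hn₀.trans hn
      obtain ⟨ha, hrem'⟩ := greedy_step_of_eq_one_div ih.2 h1n ih.1 (hrec n hn)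
      rw [prod_Ico_succ_top h1n, ← mul_assoc, ha, hrem']
      exact ⟨by push_cast; ring, mul_pos ih.2 (by omega)⟩
  exact ⟨key.1, (greedy_step_of_eq_one_div key.2 (hn₀.trans hn) key.1 (hrec n hn)).1⟩

end GreedyStep

theorem stmt_15_general (p q : ℕ) (hqodd : Odd q)
    (h1 : ¬ p ∣ q + 1) (h2 : p ∣ q + 2)
    (a : ℕ → ℤ)
    (ha1 : a 1 = ⌊1/((p:ℝ)/q)⌋ + 1)
    (harec : ∀ j, 2 ≤ j →
      a j = ⌊1/((p:ℝ)/q - ∑ n ∈ Finset.Ico 1 j, (1:ℝ)/(a n))⌋ + 1) :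
    (p : ℤ) * a 1 = q + 2 ∧
    a 2 = ⌊((q : ℝ) * (a 1 : ℝ)) / 2⌋ + 1 ∧
    ∀ n, 3 ≤ n →
      ((p:ℝ)/q - ∑ i ∈ Finset.Ico 1 n, (1:ℝ)/(a i)
        = 1 / ((q:ℝ) * ∏ i ∈ Finset.Ico 1 n, (a i : ℝ))) ∧
      a n = (q : ℤ) * ∏ i ∈ Finset.Ico 1 n, a i + 1 := by
  obtain ⟨k, hk⟩ := h2
  have hp : 2 ≤ p := by
    rcases p with _ | _ | p
    · simp at hk
    · exact absurd (one_dvd _) h1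
    · omega
  have ha1k : a 1 = k := by
    rw [ha1, one_div_div, floor_div_add_one_eq_of_add_eq_mul two_pos hp hk]
  have hrem2 := greedyRemainder_two_of_add_eq_mul hqodd.pos.ne' (by rintro rfl; simp at hk) hk ha1k
  refine ⟨by rw [ha1k]; exact_mod_cast hk.symm, ?_, ?_⟩
  · rw [harec 2 le_rfl, ← greedyRemainder, hrem2, ha1k, one_div_div]
    push_cast
    rfl
  obtain ⟨m, hm⟩ : Odd (q * k) := hqodd.mul (Nat.odd_mul.1 (hk ▸ hqodd.add_even even_two)).2
  have hmR : (q : ℝ) * k = 2 * m + 1 := by exact_mod_cast hm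
  obtain ⟨ha2, hrem3⟩ :=
    greedy_step_of_eq_two_div_odd one_le_two (by rw [hrem2]; push_cast; rw [hmR]) (harec 2 le_rfl)
  have hq3 : (q : ℤ) * ∏ i ∈ Ico 1 3, a i = (2 * m + 1) * (m + 1) := by
    rw [show Ico 1 3 = {1, 2} from rfl, prod_pair (by norm_num : (1 : ℕ) ≠ 2), ← mul_assoc, ha1k,
      ha2, show (q : ℤ) * k = 2 * m + 1 by exact_mod_cast hm]
  intro n hn
  have := greedy_tail_of_greedyRemainder_eq_one_div (by norm_num) (fun j hj ↦ harec j (by omega))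
    (by rw [hq3]; positivity) (by rw [hrem3, hq3]; push_cast; ring) n hn
  push_cast at this
  exact this

theorem stmt_15 (p q : ℕ) (hp : 0 < p) (hpq : p < q) (hqodd : Odd q)
    (h1 : ¬ p ∣ q + 1) (h2 : p ∣ q + 2)
    (a : ℕ → ℤ)
    (ha1 : a 1 = ⌊1/((p:ℝ)/q)⌋ + 1)
    (harec : ∀ j, 2 ≤ j →
      a j = ⌊1/((p:ℝ)/q - ∑ n ∈ Finset.Ico 1 j, (1:ℝ)/(a n))⌋ + 1) :
    (p : ℤ) * a 1 = q + 2 ∧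
    a 2 = ⌊((q : ℝ) * (a 1 : ℝ)) / 2⌋ + 1 ∧
    ∀ n, 3 ≤ n →
      ((p:ℝ)/q - ∑ i ∈ Finset.Ico 1 n, (1:ℝ)/(a i)
        = 1 / ((q:ℝ) * ∏ i ∈ Finset.Ico 1 n, (a i : ℝ))) ∧
      a n = (q : ℤ) * ∏ i ∈ Finset.Ico 1 n, a i + 1 :=
  stmt_15_general p q hqodd h1 h2 a ha1 harec
end

section
/- Let (x_i)_{i=1}^v and (a_i)_{i=1}^v be (weakly) increasing sequences of positive integers with (x_i) ≠ (a_i), such that for every 0 ≤ k ≤ v−1, Π_{i=1}^{k+1} a_i ≤ Π_{i=1}^{k+1} x_i. Then Σ_{i=1}^v 1/x_i < Σ_{i=1}^v 1/a_i. -/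
/-!
Put `L i = log x_i - log a_i`. The product hypothesis says that every partial sum of `L` is
nonnegative, and since the weights `1 / x_i` decrease, Abel summation gives
`0 ≤ ∑ L i / x_i`. On the other hand `log t ≤ t - 1` with `t = x_i / a_i` gives
`L i / x_i ≤ 1 / a_i - 1 / x_i`, strictly where `x_i ≠ a_i`. Summing yields the claim.
-/

open Finset Real

theorem Finset.sum_range_mul_nonneg_of_antitoneOn {R : Type*} [CommRing R] [LinearOrder R]
    [IsStrictOrderedRing R] {n : ℕ} {w g : ℕ → R} (hw : AntitoneOn w (Set.Iio n))
    (hw₀ : ∀ i < n, 0 ≤ w i) (hg : ∀ k ≤ n, 0 ≤ ∑ j ∈ range k, g j) :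
    0 ≤ ∑ i ∈ range n, w i * g i := by
  rcases n.eq_zero_or_pos with rfl | hn
  · simp
  have hparts := sum_range_by_parts w g n
  simp only [smul_eq_mul] at hparts
  rw [hparts, sub_nonneg]
  calc ∑ i ∈ range (n - 1), (w (i + 1) - w i) * ∑ j ∈ range (i + 1), g j
      ≤ 0 := by
        refine sum_nonpos fun i hi ↦ mul_nonpos_of_nonpos_of_nonneg ?_ (hg _ ?_)
        · have hi : i + 1 < n := by grind
          exact sub_nonpos.2 (hw (Set.mem_Iio.2 (by omega)) (Set.mem_Iio.2 hi) i.le_succ)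
        · grind
    _ ≤ w (n - 1) * ∑ j ∈ range n, g j := mul_nonneg (hw₀ _ (by omega)) (hg n le_rfl)

namespace Real

theorem one_div_mul_log_sub_log_le {x a : ℝ} (hx : 0 < x) (ha : 0 < a) :
    1 / x * (log x - log a) ≤ 1 / a - 1 / x := by
  have h := log_le_sub_one_of_pos (div_pos hx ha)
  rw [log_div hx.ne' ha.ne'] at h
  calc 1 / x * (log x - log a) ≤ 1 / x * (x / a - 1) := by gcongr
    _ = 1 / a - 1 / x := by field_simp

theorem one_div_mul_log_sub_log_lt {x a : ℝ} (hx : 0 < x) (ha : 0 < a) (hxa : x ≠ a) :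
    1 / x * (log x - log a) < 1 / a - 1 / x := by
  have h := log_lt_sub_one_of_pos (div_pos hx ha) (by rwa [ne_eq, div_eq_one_iff_eq ha.ne'])
  rw [log_div hx.ne' ha.ne'] at h
  calc 1 / x * (log x - log a) < 1 / x * (x / a - 1) := by gcongr
    _ = 1 / a - 1 / x := by field_simp

theorem sum_log_sub_log_nonneg_of_prod_le {ι : Type*} {s : Finset ι} {x a : ι → ℝ}
    (hx : ∀ i ∈ s, 0 < x i) (ha : ∀ i ∈ s, 0 < a i) (h : ∏ i ∈ s, a i ≤ ∏ i ∈ s, x i) :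
    0 ≤ ∑ i ∈ s, (log (x i) - log (a i)) := by
  rw [sum_sub_distrib, ← log_prod fun i hi ↦ (hx i hi).ne', ← log_prod fun i hi ↦ (ha i hi).ne',
    sub_nonneg]
  exact log_le_log (prod_pos ha) h

theorem sum_one_div_lt_of_prod_le {n : ℕ} {x a : ℕ → ℝ} (hx : ∀ i < n, 0 < x i)
    (ha : ∀ i < n, 0 < a i) (hxmono : MonotoneOn x (Set.Iio n)) (hne : ∃ i < n, x i ≠ a i)
    (hprod : ∀ k ≤ n, ∏ i ∈ range k, a i ≤ ∏ i ∈ range k, x i) :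
    ∑ i ∈ range n, 1 / x i < ∑ i ∈ range n, 1 / a i := by
  obtain ⟨m, hm, hxam⟩ := hne
  have habel : 0 ≤ ∑ i ∈ range n, 1 / x i * (log (x i) - log (a i)) := by
    refine sum_range_mul_nonneg_of_antitoneOn (fun i hi j hj hij ↦ ?_)
      (fun i hi ↦ (one_div_pos.2 (hx i hi)).le) fun k hk ↦ ?_
    · exact one_div_le_one_div_of_le (hx i hi) (hxmono hi hj hij)
    · have hk' : ∀ i ∈ range k, i < n := fun i hi ↦ (mem_range.1 hi).trans_le hk
      exact sum_log_sub_log_nonneg_of_prod_le (fun i hi ↦ hx i (hk' i hi))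
        (fun i hi ↦ ha i (hk' i hi)) (hprod k hk)
  have hlt : ∑ i ∈ range n, 1 / x i * (log (x i) - log (a i))
      < ∑ i ∈ range n, (1 / a i - 1 / x i) :=
    sum_lt_sum
      (fun i hi ↦ one_div_mul_log_sub_log_le (hx i (mem_range.1 hi)) (ha i (mem_range.1 hi)))
      ⟨m, mem_range.2 hm, one_div_mul_log_sub_log_lt (hx m hm) (ha m hm) hxam⟩
  rw [sum_sub_distrib] at hlt
  linarith

end Real

theorem stmt_16_general (v : ℕ) (x a : ℕ → ℕ)
    (hxpos : ∀ i < v, 0 < x i) (hapos : ∀ i < v, 0 < a i)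
    (hxmono : ∀ i j, i ≤ j → j < v → x i ≤ x j)
    (hne : ∃ i < v, x i ≠ a i)
    (hprod : ∀ k < v, ∏ i ∈ Finset.range (k+1), a i ≤ ∏ i ∈ Finset.range (k+1), x i) :
    ∑ i ∈ Finset.range v, (1:ℝ)/(x i) < ∑ i ∈ Finset.range v, (1:ℝ)/(a i) := by
  refine Real.sum_one_div_lt_of_prod_le (by exact_mod_cast hxpos) (by exact_mod_cast hapos)
    (fun i _ j hj hij ↦ by exact_mod_cast hxmono i j hij hj) (by exact_mod_cast hne) ?_
  rintro (_ | k) hk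
  · simp
  · exact_mod_cast hprod k hk

theorem stmt_16 (v : ℕ) (hv : 1 ≤ v) (x a : ℕ → ℕ)
    (hxpos : ∀ i < v, 0 < x i) (hapos : ∀ i < v, 0 < a i)
    (hxmono : ∀ i j, i ≤ j → j < v → x i ≤ x j)
    (hamono : ∀ i j, i ≤ j → j < v → a i ≤ a j)
    (hne : ∃ i < v, x i ≠ a i)
    (hprod : ∀ k < v, ∏ i ∈ Finset.range (k+1), a i ≤ ∏ i ∈ Finset.range (k+1), x i) :
    ∑ i ∈ Finset.range v, (1:ℝ)/(x i) < ∑ i ∈ Finset.range v, (1:ℝ)/(a i) :=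
  stmt_16_general v x a hxpos hapos hxmono hne hprod
end

section
/- Let p < q be positive integers with q odd and with 2 the least positive integer m such that p | q + m. Let (a_n) be the greedy Egyptian fraction expansion of p/q. Then for every m ∈ ℕ and every weakly increasing tuple of positive integers x_1 ≤ ⋯ ≤ x_m satisfying Σ_{n=1}^m 1/a_n ≤ Σ_{n=1}^m 1/x_n < p/q, one has x_n = a_n for all 1 ≤ n ≤ m; i.e., Σ_{n=1}^m 1/a_n is the unique best m-term underapproximation of p/q. -/
/-!
Write `p k = q + 2`. Since `p ≥ 2` and `q k` is odd, the greedy expansion starts with `a 1 = k`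
(remainder `2 / (q k)`) and `a 2 = (q k + 1) / 2` (remainder `1 / (q a 1 a 2)`); from then on
`a (n + 1) = q a 1 ⋯ a n + 1` and the remainder after `n ≥ 2` terms is `1 / (q a 1 ⋯ a n)`, the
least that `n` unit fractions below `p / q` can leave.

Let `x` be increasing with `∑ 1 / a i ≤ ∑ 1 / x i < p / q` over `i ≤ m`. By induction on `m`, the
partial sums satisfy `∑_{i ≤ j} 1 / x i ≤ ∑_{i ≤ j} 1 / a i` for `j < m`, and comparing remainders
gives `∏ a i ≤ ∏ x i`. Abel summation against the decreasing `1 / x i` gives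
`∑ (x i / a i - 1) ≤ 0`, so `x / a ≤ exp (x / a - 1)` forces `∏ x i ≤ ∏ a i`, with equality only
if `x = a`.
-/

open Finset

lemma sum_sub_div_le_of_antitoneOn {s t : ℕ → ℝ} {n : ℕ} (hs : ∀ i ∈ Icc 1 n, 0 < s i)
    (hanti : AntitoneOn s (Set.Icc 1 n))
    (hpre : ∀ j ∈ Ico 1 n, ∑ i ∈ Icc 1 j, s i ≤ ∑ i ∈ Icc 1 j, t i) :
    ∑ i ∈ Icc 1 n, (t i - s i) / s i ≤ (∑ i ∈ Icc 1 n, (t i - s i)) / s n := by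
  induction n with
  | zero => simp
  | succ n ih =>
    rcases Nat.eq_zero_or_pos n with rfl | hn
    · simp
    have hsub : Icc 1 n ⊆ Icc 1 (n + 1) := Icc_subset_Icc_right n.le_succ
    have hprev := ih (fun i hi => hs i (hsub hi))
      (hanti.mono (Set.Icc_subset_Icc_right n.le_succ))
      (fun j hj => hpre j (Ico_subset_Ico_right n.le_succ hj))
    have hD : 0 ≤ ∑ i ∈ Icc 1 n, (t i - s i) := by
      rw [sum_sub_distrib, sub_nonneg]
      exact hpre n (mem_Ico.2 ⟨hn, n.lt_succ_self⟩)
    have hlast : (∑ i ∈ Icc 1 n, (t i - s i)) / s n ≤ (∑ i ∈ Icc 1 n, (t i - s i)) / s (n + 1) :=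
      div_le_div_of_nonneg_left hD (hs (n + 1) (by simp))
        (hanti (by simp only [Set.mem_Icc]; omega) (by simp) n.le_succ)
    rw [sum_Icc_succ_top (by omega), sum_Icc_succ_top (by omega), add_div]
    linarith

lemma eq_of_prod_le_prod_of_sum_le {s t : ℕ → ℝ} {n : ℕ} (hs : ∀ i ∈ Icc 1 n, 0 < s i)
    (ht : ∀ i ∈ Icc 1 n, 0 < t i) (hanti : AntitoneOn s (Set.Icc 1 n))
    (hpre : ∀ j ∈ Ico 1 n, ∑ i ∈ Icc 1 j, s i ≤ ∑ i ∈ Icc 1 j, t i)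
    (hsum : ∑ i ∈ Icc 1 n, t i ≤ ∑ i ∈ Icc 1 n, s i)
    (hprod : ∏ i ∈ Icc 1 n, s i ≤ ∏ i ∈ Icc 1 n, t i) :
    ∀ i ∈ Icc 1 n, s i = t i := by
  by_contra! hne
  obtain ⟨i₀, hi₀, hne₀⟩ := hne
  have hn : n ∈ Icc 1 n := by simp only [mem_Icc] at hi₀ ⊢; omega
  have habel : ∑ i ∈ Icc 1 n, (t i - s i) / s i ≤ 0 :=
    (sum_sub_div_le_of_antitoneOn hs hanti hpre).trans
      (div_nonpos_of_nonpos_of_nonneg (by rw [sum_sub_distrib]; linarith) (hs n hn).le)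
  have hratio : ∀ i ∈ Icc 1 n, t i / s i = (t i - s i) / s i + 1 := fun i hi => by
    rw [sub_div, div_self (hs i hi).ne', sub_add_cancel]
  have hlt : ∏ i ∈ Icc 1 n, t i / s i < 1 :=
    calc ∏ i ∈ Icc 1 n, t i / s i
        < ∏ i ∈ Icc 1 n, Real.exp ((t i - s i) / s i) := by
          refine prod_lt_prod (fun i hi => div_pos (ht i hi) (hs i hi))
            (fun i hi => hratio i hi ▸ Real.add_one_le_exp _) ⟨i₀, hi₀, ?_⟩
          rw [hratio i₀ hi₀]
          exact Real.add_one_lt_exp (div_ne_zero (sub_ne_zero.2 (Ne.symm hne₀)) (hs i₀ hi₀).ne')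
      _ = Real.exp (∑ i ∈ Icc 1 n, (t i - s i) / s i) := (Real.exp_sum _ _).symm
      _ ≤ 1 := Real.exp_le_one_iff.2 habel
  rw [prod_div_distrib, div_lt_one (prod_pos hs)] at hlt
  linarith

lemma exists_sum_one_div_mul_prod_eq_intCast {ι : Type*} (s : Finset ι) (x : ι → ℤ)
    (hx : ∀ i ∈ s, x i ≠ 0) :
    ∃ N : ℤ, (∑ i ∈ s, (1 : ℝ) / x i) * ∏ i ∈ s, (x i : ℝ) = N := by
  induction s using Finset.cons_induction with
  | empty => exact ⟨0, by simp⟩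
  | cons j s hj ih =>
    obtain ⟨N, hN⟩ := ih fun i hi => hx i (mem_cons_of_mem hi)
    have hxj : (x j : ℝ) ≠ 0 := by exact_mod_cast hx j (mem_cons_self j s)
    refine ⟨∏ i ∈ s, x i + x j * N, ?_⟩
    rw [sum_cons, prod_cons]
    push_cast
    rw [← hN]
    field_simp

lemma one_div_mul_prod_le_sub_sum {ι : Type*} (s : Finset ι) (x : ι → ℤ)
    (hx : ∀ i ∈ s, 0 < x i) {p q : ℕ} (hq : 0 < q) (h : ∑ i ∈ s, (1 : ℝ) / x i < p / q) :
    1 / (q * ∏ i ∈ s, (x i : ℝ)) ≤ p / q - ∑ i ∈ s, (1 : ℝ) / x i := by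
  obtain ⟨N, hN⟩ := exists_sum_one_div_mul_prod_eq_intCast s x fun i hi => (hx i hi).ne'
  have hD : 0 < (q : ℝ) * ∏ i ∈ s, (x i : ℝ) :=
    mul_pos (by exact_mod_cast hq) (prod_pos fun i hi => by exact_mod_cast hx i hi)
  -- the remainder times `q ∏ x i` is an integer, and it is positive
  have hM : (p / q - ∑ i ∈ s, (1 : ℝ) / x i) * (q * ∏ i ∈ s, (x i : ℝ))
      = ((p * ∏ i ∈ s, x i - q * N : ℤ) : ℝ) := by
    push_cast
    rw [← hN]
    field_simp
  have hMpos : 0 < p * ∏ i ∈ s, x i - q * N := by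
    exact_mod_cast hM ▸ mul_pos (sub_pos.2 h) hD
  rw [div_le_iff₀ hD, hM]
  exact_mod_cast hMpos

/-- The greedy Egyptian fraction expansion of `p / q`; the case `n = 0` is `a 1 = ⌊q / p⌋ + 1`. -/
def IsGreedyExpansion (p q : ℕ) (a : ℕ → ℤ) : Prop :=
  ∀ n, a (n + 1) = ⌊1 / ((p : ℝ) / q - ∑ i ∈ Icc 1 n, (1 : ℝ) / a i)⌋ + 1

namespace IsGreedyExpansion

variable {p q : ℕ} {a : ℕ → ℤ}

lemma le_of_one_div_lt (ha : IsGreedyExpansion p q a) (n : ℕ) {y : ℤ} (hy : 0 < y)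
    (h : 1 / (y : ℝ) < p / q - ∑ i ∈ Icc 1 n, (1 : ℝ) / a i) : a (n + 1) ≤ y := by
  have hrem : 0 < (p : ℝ) / q - ∑ i ∈ Icc 1 n, (1 : ℝ) / a i :=
    lt_trans (one_div_pos.2 (by exact_mod_cast hy)) h
  rw [ha n, Int.add_one_le_iff, Int.floor_lt]
  rwa [one_div_lt (by exact_mod_cast hy) hrem] at h

lemma step (ha : IsGreedyExpansion p q a) {n : ℕ} {d N e r : ℤ} (hN : 0 < N) (hr : 0 < r)
    (hrd : r ≤ d) (he : d * e = N + r)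
    (hrem : (p : ℝ) / q - ∑ i ∈ Icc 1 n, (1 : ℝ) / a i = d / N) :
    a (n + 1) = e ∧ (p : ℝ) / q - ∑ i ∈ Icc 1 (n + 1), (1 : ℝ) / a i = r / (N * e) := by
  have hd : (0 : ℝ) < d := by exact_mod_cast hr.trans_le hrd
  have heR : (d : ℝ) * e = N + r := by exact_mod_cast he
  have hNR : (0 : ℝ) < N := by exact_mod_cast hN
  have hrR : (0 : ℝ) < r := by exact_mod_cast hr
  have hrdR : (r : ℝ) ≤ d := by exact_mod_cast hrd
  have hfloor : ⌊(N : ℝ) / d⌋ = e - 1 := by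
    rw [Int.floor_eq_iff, le_div_iff₀ hd, div_lt_iff₀ hd]
    push_cast
    constructor <;> nlinarith
  have hae : a (n + 1) = e := by rw [ha n, hrem, one_div_div, hfloor, sub_add_cancel]
  refine ⟨hae, ?_⟩
  have he0 : (e : ℝ) ≠ 0 := by
    rintro h0
    rw [h0, mul_zero] at heR
    linarith
  rw [sum_Icc_succ_top (by omega), ← sub_sub, hrem, hae]
  field_simp
  linarith

lemma remainder_eq_of_le (ha : IsGreedyExpansion p q a) (hq : 0 < q) {n : ℕ}
    (hpos : ∀ i ∈ Icc 1 n, 0 < a i)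
    (hrem : (p : ℝ) / q - ∑ i ∈ Icc 1 n, (1 : ℝ) / a i = 1 / (q * ∏ i ∈ Icc 1 n, (a i : ℝ)))
    {m : ℕ} (hnm : n ≤ m) :
    (∀ i ∈ Icc 1 m, 0 < a i) ∧
      (p : ℝ) / q - ∑ i ∈ Icc 1 m, (1 : ℝ) / a i = 1 / (q * ∏ i ∈ Icc 1 m, (a i : ℝ)) := by
  induction m, hnm using Nat.le_induction with
  | base => exact ⟨hpos, hrem⟩
  | succ m _ ih =>
    obtain ⟨hpos, hrem⟩ := ih
    have hP : 0 < q * ∏ i ∈ Icc 1 m, a i := mul_pos (by exact_mod_cast hq) (prod_pos hpos)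
    obtain ⟨hnext, hrem'⟩ := ha.step (d := 1) (r := 1) hP one_pos le_rfl (one_mul _)
      (by rw [hrem]; push_cast; rfl)
    refine ⟨fun i hi => ?_, ?_⟩
    · rcases (by simp only [mem_Icc] at hi ⊢; omega : i ∈ Icc 1 m ∨ i = m + 1) with hi | rfl
      · exact hpos i hi
      · rw [hnext]
        exact hP.trans (lt_add_one _)
    · rw [hrem', prod_Icc_succ_top (by omega), hnext]
      push_cast
      ring

lemma remainder_eq_of_dvd_add_two (ha : IsGreedyExpansion p q a) (hq : Odd q)
    (h1 : ¬ p ∣ q + 1) (h2 : p ∣ q + 2) :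
    (∀ i, 1 ≤ i → 0 < a i) ∧ ∀ n, 2 ≤ n →
      (p : ℝ) / q - ∑ i ∈ Icc 1 n, (1 : ℝ) / a i = 1 / (q * ∏ i ∈ Icc 1 n, (a i : ℝ)) := by
  obtain ⟨k, hk⟩ := h2
  have hp : 2 ≤ p := by
    rcases p with _ | _ | p
    · omega
    · exact absurd (one_dvd _) h1
    · omega
  have hk0 : 0 < k := Nat.pos_of_ne_zero (by rintro rfl; omega)
  obtain ⟨e, he⟩ : Odd (q * k) := hq.mul (Nat.odd_mul.1 (hk ▸ hq.add_even even_two)).2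
  obtain ⟨ha1, hrem1⟩ := ha.step (n := 0) (d := p) (N := q) (e := k) (r := 2)
    (by exact_mod_cast hq.pos) two_pos (by exact_mod_cast hp) (by exact_mod_cast hk.symm)
    (by simp)
  obtain ⟨ha2, hrem2⟩ := ha.step (n := 1) (d := 2) (N := q * k) (e := e + 1) (r := 1)
    (by exact_mod_cast Nat.mul_pos hq.pos hk0) one_pos one_le_two
    (by exact_mod_cast (by omega : 2 * (e + 1) = q * k + 1))
    (by rw [hrem1]; push_cast; rfl)
  have hpos2 : ∀ i ∈ Icc 1 2, 0 < a i := by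
    intro i hi
    rcases (by simp only [mem_Icc] at hi; omega : i = 1 ∨ i = 2) with rfl | rfl
    · rw [ha1]; exact_mod_cast hk0
    · rw [ha2]; positivity
  have hrem2' : (p : ℝ) / q - ∑ i ∈ Icc 1 2, (1 : ℝ) / a i
      = 1 / (q * ∏ i ∈ Icc 1 2, (a i : ℝ)) := by
    rw [hrem2, prod_Icc_succ_top (by omega), Icc_self, prod_singleton, ha1, ha2]
    push_cast
    ring
  refine ⟨fun i hi => ?_, fun n hn => (ha.remainder_eq_of_le hq.pos hpos2 hrem2' hn).2⟩
  exact (ha.remainder_eq_of_le hq.pos hpos2 hrem2' (le_max_right i 2)).1 i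
    (mem_Icc.2 ⟨hi, le_max_left i 2⟩)

theorem eq_of_sum_le_of_sum_lt (ha : IsGreedyExpansion p q a) (hq : 0 < q)
    (hpos : ∀ i, 1 ≤ i → 0 < a i)
    (hrem : ∀ n, 2 ≤ n →
      (p : ℝ) / q - ∑ i ∈ Icc 1 n, (1 : ℝ) / a i = 1 / (q * ∏ i ∈ Icc 1 n, (a i : ℝ)))
    (m : ℕ) (x : ℕ → ℤ) (hx : ∀ i ∈ Icc 1 m, 0 < x i) (hmono : MonotoneOn x (Set.Icc 1 m))
    (hle : ∑ i ∈ Icc 1 m, (1 : ℝ) / a i ≤ ∑ i ∈ Icc 1 m, (1 : ℝ) / x i)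
    (hlt : ∑ i ∈ Icc 1 m, (1 : ℝ) / x i < p / q) :
    ∀ i ∈ Icc 1 m, x i = a i := by
  induction m using Nat.strong_induction_on with
  | _ m ih =>
  have hxR : ∀ i ∈ Icc 1 m, (0 : ℝ) < x i := fun i hi => by exact_mod_cast hx i hi
  have haR : ∀ i ∈ Icc 1 m, (0 : ℝ) < a i := fun i hi => by
    exact_mod_cast hpos i (mem_Icc.1 hi).1
  rcases (by omega : m = 0 ∨ m = 1 ∨ 2 ≤ m) with rfl | rfl | hm
  · simp
  · simp only [Icc_self, sum_singleton, mem_singleton, forall_eq] at hle hlt ⊢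
    have hx1 := hx 1 (by simp)
    refine le_antisymm ?_ (ha.le_of_one_div_lt 0 hx1 (by simpa using hlt))
    exact_mod_cast (one_div_le_one_div (haR 1 (by simp)) (hxR 1 (by simp))).1 hle
  have hpre : ∀ j ∈ Ico 1 m, ∑ i ∈ Icc 1 j, (1 : ℝ) / x i ≤ ∑ i ∈ Icc 1 j, (1 : ℝ) / a i := by
    intro j hj
    by_contra! hgt
    have hsub : Icc 1 j ⊆ Icc 1 m := Icc_subset_Icc_right (mem_Ico.1 hj).2.le
    have hltj : ∑ i ∈ Icc 1 j, (1 : ℝ) / x i < p / q :=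
      (sum_le_sum_of_subset_of_nonneg hsub fun i hi _ => (one_div_pos.2 (hxR i hi)).le).trans_lt hlt
    have hxa := ih j (mem_Ico.1 hj).2 (fun i hi => hx i (hsub hi))
      (hmono.mono (Set.Icc_subset_Icc_right (mem_Ico.1 hj).2.le)) hgt.le hltj
    exact hgt.ne (sum_congr rfl fun i hi => by rw [hxa i hi])
  -- comparing remainders: `1 / (q ∏ x i) ≤ p / q - ∑ 1 / x i ≤ p / q - ∑ 1 / a i = 1 / (q ∏ a i)`
  have hprod : ∏ i ∈ Icc 1 m, (a i : ℝ) ≤ ∏ i ∈ Icc 1 m, (x i : ℝ) := by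
    have hremx := one_div_mul_prod_le_sub_sum (Icc 1 m) x hx hq hlt
    rw [← sub_le_sub_iff_left ((p : ℝ) / q), hrem m hm] at hle
    have hqR : (0 : ℝ) < q := by exact_mod_cast hq
    exact le_of_mul_le_mul_left ((one_div_le_one_div (mul_pos hqR (prod_pos hxR))
      (mul_pos hqR (prod_pos haR))).1 (hremx.trans hle)) hqR
  have hrecip := eq_of_prod_le_prod_of_sum_le (s := fun i => (1 : ℝ) / x i)
    (t := fun i => (1 : ℝ) / a i) (fun i hi => one_div_pos.2 (hxR i hi))
    (fun i hi => one_div_pos.2 (haR i hi))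
    (fun i hi j hj hij =>
      one_div_le_one_div_of_le (hxR i (mem_Icc.2 hi)) (by exact_mod_cast hmono hi hj hij))
    hpre hle (by
      simp only [prod_div_distrib, prod_const_one]
      exact one_div_le_one_div_of_le (prod_pos haR) hprod)
  intro i hi
  simpa using hrecip i hi

end IsGreedyExpansion

theorem stmt_17_general (p q : ℕ) (hqodd : Odd q)
    (h1 : ¬ p ∣ q + 1) (h2 : p ∣ q + 2)
    (a : ℕ → ℤ)
    (ha1 : a 1 = ⌊1/((p:ℝ)/q)⌋ + 1)
    (harec : ∀ j, 2 ≤ j →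
      a j = ⌊1/((p:ℝ)/q - ∑ n ∈ Finset.Ico 1 j, (1:ℝ)/(a n))⌋ + 1) :
    ∀ m : ℕ, 1 ≤ m → ∀ x : ℕ → ℤ,
      (∀ n ∈ Finset.Icc 1 m, 0 < x n) →
      (∀ i j, 1 ≤ i → i ≤ j → j ≤ m → x i ≤ x j) →
      (∑ n ∈ Finset.Icc 1 m, (1:ℝ)/(a n) ≤ ∑ n ∈ Finset.Icc 1 m, (1:ℝ)/(x n)) →
      (∑ n ∈ Finset.Icc 1 m, (1:ℝ)/(x n) < (p:ℝ)/q) →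
      ∀ n ∈ Finset.Icc 1 m, x n = a n := by
  intro m _ x hx hmono hle hlt
  have ha : IsGreedyExpansion p q a := by
    rintro (_ | n)
    · simpa using ha1
    · rw [harec (n + 1 + 1) (by omega), Ico_add_one_right_eq_Icc]
  obtain ⟨hpos, hrem⟩ := ha.remainder_eq_of_dvd_add_two hqodd h1 h2
  exact ha.eq_of_sum_le_of_sum_lt hqodd.pos hpos hrem m x hx
    (fun i hi j hj hij => hmono i j hi.1 hij hj.2) hle hlt

theorem stmt_17 (p q : ℕ) (hp : 0 < p) (hpq : p < q) (hqodd : Odd q)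
    (h1 : ¬ p ∣ q + 1) (h2 : p ∣ q + 2)
    (a : ℕ → ℤ)
    (ha1 : a 1 = ⌊1/((p:ℝ)/q)⌋ + 1)
    (harec : ∀ j, 2 ≤ j →
      a j = ⌊1/((p:ℝ)/q - ∑ n ∈ Finset.Ico 1 j, (1:ℝ)/(a n))⌋ + 1) :
    ∀ m : ℕ, 1 ≤ m → ∀ x : ℕ → ℤ,
      (∀ n ∈ Finset.Icc 1 m, 0 < x n) →
      (∀ i j, 1 ≤ i → i ≤ j → j ≤ m → x i ≤ x j) →
      (∑ n ∈ Finset.Icc 1 m, (1:ℝ)/(a n) ≤ ∑ n ∈ Finset.Icc 1 m, (1:ℝ)/(x n)) →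
      (∑ n ∈ Finset.Icc 1 m, (1:ℝ)/(x n) < (p:ℝ)/q) →
      ∀ n ∈ Finset.Icc 1 m, x n = a n :=
  stmt_17_general p q hqodd h1 h2 a ha1 harec
end
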